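/- arXiv:1905.02364 — 9 statements merged into one kernel-verified Lean document; each statement's English description precedes it below -/
import Mathlib

section
/- Let a, b be natural numbers with gcd(10a, b) = 1 and a < b, and let e be the multiplicative order of 10 modulo b. Suppose e = l·n for natural numbers n > 1 and l. Define L = gcd(10^l - 1, b) and B = b/L. For i = 0, ..., n-1 let s_i be the natural number with s_i ≡ 10^{l·i}·a (mod b) and 0 ≤ s_i < b. Then B divides the sum s_0 + s_1 + ... + s_{n-1}. -/
/-! With q = 10^l, the residues satisfy s_i ≡ q^i a (mod b) and q^n = 1 in ZMod b, so the
telescoping identity (q - 1)(1 + q + ⋯ + q^(n-1)) = q^n - 1 gives b ∣ (q - 1) ∑ s_i.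
Dividing out L = gcd(q - 1, b) leaves B = b / L coprime to (q - 1) / L, hence B ∣ ∑ s_i. -/

open Finset

theorem Nat.div_gcd_dvd_of_dvd_mul {m c s : ℕ} (hm : m ≠ 0) (h : m ∣ c * s) :
    m / c.gcd m ∣ s := by
  have hg : 0 < c.gcd m := Nat.gcd_pos_of_pos_right c (Nat.pos_of_ne_zero hm)
  refine (Nat.coprime_div_gcd_div_gcd hg).symm.dvd_of_dvd_mul_left
    (Nat.dvd_of_mul_dvd_mul_right hg ?_)
  rwa [Nat.div_mul_cancel (Nat.gcd_dvd_right c m), mul_right_comm,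
    Nat.div_mul_cancel (Nat.gcd_dvd_left c m)]

theorem dvd_pred_mul_sum_pow_mul_mod {m q n : ℕ} (a : ℕ) (hq : (q : ZMod m) ^ n = 1) :
    m ∣ (q - 1) * ∑ i ∈ range n, q ^ i * a % m := by
  rcases Nat.eq_zero_or_pos q with rfl | hq0
  · simp
  rw [← ZMod.natCast_eq_zero_iff]
  push_cast [Nat.cast_sub hq0, ZMod.natCast_mod]
  rw [← sum_mul, ← mul_assoc, mul_comm _ (∑ i ∈ range n, _), geom_sum_mul, hq, sub_self, zero_mul]

theorem stmt_0_general (a b n l : ℕ) (hgcd : Nat.gcd (10 * a) b = 1)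
    (he : orderOf (10 : ZMod b) = l * n) :
    (b / Nat.gcd (10 ^ l - 1) b) ∣ ∑ i ∈ Finset.range n, (10 ^ (l * i) * a) % b := by
  have hb : b ≠ 0 := by
    rintro rfl
    simp at hgcd
  have hperiod : ((10 ^ l : ℕ) : ZMod b) ^ n = 1 := by
    rw [Nat.cast_pow, Nat.cast_ofNat, ← pow_mul, ← he, pow_orderOf_eq_one]
  refine Nat.div_gcd_dvd_of_dvd_mul hb ?_
  simpa only [pow_mul] using dvd_pred_mul_sum_pow_mul_mod a hperiod

theorem stmt_0 (a b n l : ℕ) (hgcd : Nat.gcd (10 * a) b = 1) (hab : a < b)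
    (hn : 1 < n) (he : orderOf (10 : ZMod b) = l * n) :
    (b / Nat.gcd (10 ^ l - 1) b) ∣ ∑ i ∈ Finset.range n, (10 ^ (l * i) * a) % b :=
  stmt_0_general a b n l hgcd he
end

section
/- Let a, b be natural numbers with gcd(10a, b) = 1 and a < b, let e be the multiplicative order of 10 modulo b, and suppose e = 2l. Define L = gcd(10^l - 1, b), B = b/L, and let s_1 be the integer with s_1 ≡ 10^l (mod b), 0 ≤ s_1 < b. If a = 1, then the integer k = (1 + s_1)/B satisfies B·k ≡ 2 (mod L) and 1 ≤ k ≤ L. -/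
theorem stmt_1 (b l L B s k : ℕ) (hb : 1 < b) (hgcd : Nat.gcd 10 b = 1)
    (he : orderOf (10 : ZMod b) = 2 * l)
    (hL : L = Nat.gcd (10 ^ l - 1) b) (hB : B = b / L)
    (hs : s = 10 ^ l % b) (hk : k = (1 + s) / B) :
    B * k ≡ 2 [MOD L] ∧ 1 ≤ k ∧ k ≤ L := by
  set x := 10 ^ l with hx
  have hx1 : 1 ≤ x := Nat.one_le_pow _ _ (by norm_num)
  have hb0 : 0 < b := by omega
  -- b divides 10^(2l) - 1
  have hpow : (10 : ZMod b) ^ (2 * l) = 1 := by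
    rw [← he]; exact pow_orderOf_eq_one _
  have hdvd : b ∣ 10 ^ (2 * l) - 1 := by
    have h1 : ((10 ^ (2 * l) - 1 : ℕ) : ZMod b) = 0 := by
      have := Nat.one_le_pow (2 * l) 10 (by norm_num)
      push_cast [Nat.cast_sub this]
      rw [hpow]; ring
    exact (ZMod.natCast_eq_zero_iff _ _).mp h1
  have hfact : 10 ^ (2 * l) - 1 = (x - 1) * (x + 1) := by
    obtain ⟨m, hm⟩ := Nat.exists_eq_add_of_le hx1
    have hsq : 10 ^ (2 * l) = x * x := by rw [two_mul, pow_add]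
    rw [hsq, hm]
    have e1 : 1 + m - 1 = m := by omega
    have e2 : 1 + m + 1 = m + 2 := by omega
    rw [e1, e2]
    have h2 : (1 + m) * (1 + m) = m * (m + 2) + 1 := by ring
    omega
  have hdvd' : b ∣ (x - 1) * (x + 1) := hfact ▸ hdvd
  have hL0 : 0 < L := by
    rw [hL]; exact Nat.gcd_pos_of_pos_right _ hb0
  have hLb : L ∣ b := hL ▸ Nat.gcd_dvd_right _ _
  have hLx : L ∣ x - 1 := hL ▸ Nat.gcd_dvd_left _ _
  have hbLB : b = L * B := by rw [hB, Nat.mul_div_cancel' hLb]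
  have hB0 : 0 < B := by
    rcases Nat.eq_zero_or_pos B with h | h
    · rw [h, mul_zero] at hbLB; omega
    · exact h
  -- coprimality of (x-1)/L and B
  have hcop : Nat.Coprime ((x - 1) / L) B := by
    have := Nat.coprime_div_gcd_div_gcd (m := x - 1) (n := b) (hL ▸ hL0)
    rw [← hL] at this
    rw [hB]; exact this
  -- B divides x + 1
  have hBx : B ∣ x + 1 := by
    have h1 : (x - 1) * (x + 1) = L * (((x - 1) / L) * (x + 1)) := by
      rw [← mul_assoc, Nat.mul_div_cancel' hLx]
    have h2 : L * B ∣ L * (((x - 1) / L) * (x + 1)) := by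
      rw [← h1, ← hbLB]; exact hdvd'
    have h3 : B ∣ ((x - 1) / L) * (x + 1) :=
      (mul_dvd_mul_iff_left hL0.ne').mp h2
    exact hcop.symm.dvd_of_dvd_mul_left h3
  -- B divides 1 + s
  have hxs : x = b * (x / b) + s := by rw [hs]; exact (Nat.div_add_mod x b).symm
  have hBs : B ∣ 1 + s := by
    have hBb : B ∣ b := hbLB ▸ dvd_mul_left B L
    have : B ∣ b * (x / b) + (s + 1) := by
      have : b * (x / b) + (s + 1) = x + 1 := by omega
      rw [this]; exact hBx
    have := (Nat.dvd_add_right (hBb.mul_right (x / b))).mp this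
    rwa [Nat.add_comm] at this
  have hBk : B * k = 1 + s := by rw [hk, Nat.mul_div_cancel' hBs]
  have hsb : s < b := by rw [hs]; exact Nat.mod_lt _ hb0
  refine ⟨?_, ?_, ?_⟩
  · -- B * k ≡ 2 [MOD L]
    rw [hBk]
    have h1 : s ≡ x [MOD L] := by
      have : s ≡ x [MOD b] := by rw [hs]; exact Nat.mod_modEq x b
      exact this.of_dvd hLb
    have h2 : (2 : ℕ) ≡ 1 + x [MOD L] := by
      rw [Nat.modEq_iff_dvd' (by omega)]
      have : 1 + x - 2 = x - 1 := by omega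
      rw [this]; exact hLx
    calc 1 + s ≡ 1 + x [MOD L] := Nat.ModEq.add_left 1 h1
      _ ≡ 2 [MOD L] := h2.symm
  · -- 1 ≤ k
    rcases Nat.eq_zero_or_pos k with h | h
    · rw [h, mul_zero] at hBk; omega
    · exact h
  · -- k ≤ L
    have : B * k ≤ B * L := by rw [hBk, mul_comm B L, ← hbLB]; omega
    exact Nat.le_of_mul_le_mul_left this hB0
end

section
/- Let f(x) be a monic irreducible polynomial over ℚ of prime degree p with complex roots α_1, ..., α_p. If integers m_1, ..., m_p and m satisfy ∑_{i=1}^p m_i α_i = m, then m_1 = m_2 = ... = m_p (i.e., the relation is a rational multiple of the trivial relation ∑ α_i = trace). -/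
/-!
The Galois group of `f` has order divisible by `p`, hence contains an element `σ` of order `p`,
which permutes the `p` roots cyclically. Labelling the roots `β t` by `t : ZMod p` so that `σ`
acts as `t ↦ t + 1`, the conjugates of the relation under the powers of `σ` say that
`j ↦ ∑ t, c t * β (t + j)` is constant. Taking discrete Fourier transforms gives
`(∑ t, c t ζ_u ^ t) * β̂ u = 0` for all `u ≠ 0`, with `ζ_u` a primitive `p`-th root of unity.
The roots are distinct, so `β` is not constant and `β̂ u ≠ 0` for some `u ≠ 0`. Hence
`∑ t, c t ζ_u ^ t = 0`, and since the minimal polynomial of `ζ_u` over `ℚ` is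
`1 + X + ⋯ + X ^ (p - 1)`, all `c t` are equal.
-/

open Polynomial Finset

lemma Polynomial.coeff_cyclotomic_prime {R : Type*} [Ring R] {p : ℕ} [Fact p.Prime] {k : ℕ}
    (hk : k < p) : (cyclotomic p R).coeff k = 1 := by
  simp [cyclotomic_prime, coeff_X_pow, hk]

lemma IsPrimitiveRoot.eq_of_sum_smul_pow_eq_zero {p : ℕ} [Fact p.Prime] {K : Type*} [Field K]
    [CharZero K] {η : K} (hη : IsPrimitiveRoot η p) {c : ZMod p → ℚ}
    (h : ∑ t, c t • η ^ t.val = 0) (s t : ZMod p) : c s = c t := by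
  set g : ℚ[X] := ∑ t, C (c t) * X ^ t.val
  have hg_coeff : ∀ s, g.coeff s.val = c s := fun s ↦ by
    simp [g, ZMod.val_injective p |>.eq_iff]
  have hg_root : aeval η g = 0 := by simpa [g, Algebra.smul_def] using h
  have hg_deg : g.natDegree ≤ (cyclotomic p ℚ).natDegree := by
    rw [natDegree_cyclotomic, Nat.totient_prime Fact.out]
    refine natDegree_sum_le_of_forall_le _ _ fun t _ ↦ (natDegree_C_mul_X_pow_le _ _).trans ?_
    have := ZMod.val_lt t
    omega
  have hg_dvd : cyclotomic p ℚ ∣ g := by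
    rw [cyclotomic_eq_minpoly_rat hη (Fact.out : p.Prime).pos]
    exact minpoly.dvd ℚ η hg_root
  have hg_eq := eq_leadingCoeff_mul_of_monic_of_dvd_of_natDegree_le (cyclotomic.monic p ℚ)
    hg_dvd hg_deg
  rw [← hg_coeff s, ← hg_coeff t, hg_eq, coeff_C_mul, coeff_C_mul,
    coeff_cyclotomic_prime (ZMod.val_lt s), coeff_cyclotomic_prime (ZMod.val_lt t)]

namespace ZMod

variable {N : ℕ} [NeZero N] {E : Type*} [AddCommGroup E] [Module ℂ E]

lemma dft_comp_add_left (Φ : ZMod N → E) (t k : ZMod N) :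
    𝓕 (fun j ↦ Φ (t + j)) k = stdAddChar (t * k) • 𝓕 Φ k := by
  simp only [dft_apply, Finset.smul_sum, smul_smul, ← AddChar.map_add_eq_mul]
  refine Fintype.sum_equiv (Equiv.addLeft t) _ _ fun j ↦ ?_
  simp only [Equiv.coe_addLeft]
  congr 2
  ring

lemma dft_const_of_ne_zero (a : E) {k : ZMod N} (hk : k ≠ 0) : 𝓕 (fun _ ↦ a) k = 0 := by
  classical
  rw [dft_apply, ← Finset.sum_smul]
  simp_rw [← mul_neg]
  rw [AddChar.sum_mulShift _ (isPrimitive_stdAddChar N), if_neg (neg_ne_zero.mpr hk), Nat.cast_zero,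
    zero_smul]

lemma apply_eq_apply_of_dft_eq_zero {Φ : ZMod N → E} (h : ∀ k ≠ 0, 𝓕 Φ k = 0) (i j : ZMod N) :
    Φ i = Φ j := by
  have key : ∀ i, Φ i = (N : ℂ)⁻¹ • 𝓕 Φ 0 := fun i ↦ by
    conv_lhs => rw [← LinearEquiv.symm_apply_apply 𝓕 Φ]
    rw [invDFT_apply, Finset.sum_eq_single 0
      (fun k _ hk ↦ by rw [h k hk, smul_zero]) (by simp), zero_mul, AddChar.map_zero_eq_one,
      one_smul]
  rw [key i, key j]

lemma dft_sum_mul_comp_add (c β : ZMod N → ℂ) (k : ZMod N) :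
    𝓕 (fun j ↦ ∑ t, c t * β (t + j)) k = (∑ t, c t * stdAddChar (t * k)) * 𝓕 β k := by
  have : (fun j ↦ ∑ t, c t * β (t + j)) = ∑ t, c t • fun j ↦ β (t + j) := by
    ext j; simp
  rw [this, map_sum]
  simp only [Finset.sum_apply, dft_const_smul, Pi.smul_apply, dft_comp_add_left, smul_eq_mul,
    Finset.sum_mul, mul_assoc]

lemma isPrimitiveRoot_stdAddChar {p : ℕ} [Fact p.Prime] {u : ZMod p} (hu : u ≠ 0) :
    IsPrimitiveRoot (stdAddChar u) p := by
  rw [IsPrimitiveRoot.iff_orderOf]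
  refine orderOf_eq_prime ?_ fun h ↦ hu (injective_stdAddChar ?_)
  · rw [← AddChar.map_nsmul_eq_pow, nsmul_eq_mul, ZMod.natCast_self, zero_mul,
      AddChar.map_zero_eq_one]
  · rw [h, AddChar.map_zero_eq_one]

lemma stdAddChar_mul_eq_pow {N : ℕ} [NeZero N] (t u : ZMod N) :
    stdAddChar (t * u) = stdAddChar u ^ t.val := by
  rw [← AddChar.map_nsmul_eq_pow, nsmul_eq_mul, ZMod.natCast_zmod_val]

theorem eq_of_sum_mul_comp_add_eq_const {p : ℕ} [Fact p.Prime] {β : ZMod p → ℂ}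
    (hβ : ∃ i j, β i ≠ β j) {c : ZMod p → ℚ} {a : ℂ} (h : ∀ j, ∑ t, (c t : ℂ) * β (t + j) = a)
    (s t : ZMod p) : c s = c t := by
  obtain ⟨u, hu, hβu⟩ : ∃ u ≠ 0, 𝓕 β u ≠ 0 := by
    by_contra! hβ0
    obtain ⟨i, j, hij⟩ := hβ
    exact hij (apply_eq_apply_of_dft_eq_zero hβ0 i j)
  have hcu : (∑ t, (c t : ℂ) * stdAddChar (t * u)) * 𝓕 β u = 0 := by
    rw [← dft_sum_mul_comp_add, funext h, dft_const_of_ne_zero a hu]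
  refine (isPrimitiveRoot_stdAddChar hu).eq_of_sum_smul_pow_eq_zero ?_ s t
  simpa [Rat.smul_def, stdAddChar_mul_eq_pow, hβu] using hcu

end ZMod

theorem Polynomial.Gal.sum_smul_smul_eq_algebraMap {F E : Type*} [Field F] [Field E]
    [Algebra F E] {f : F[X]} [Fact ((f.map (algebraMap F E)).Splits)] {ι : Type*} [Fintype ι]
    (σ : f.Gal) (c : ι → F) (x : ι → f.rootSet E) {r : F}
    (h : ∑ i, c i • (x i : E) = algebraMap F E r) :
    ∑ i, c i • ((σ • x i : f.rootSet E) : E) = algebraMap F E r := by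
  set φ := IsScalarTower.toAlgHom F f.SplittingField E
  set y : ι → f.SplittingField := fun i ↦ (rootsEquivRoots f E).symm (x i)
  have hx : ∀ i, (x i : E) = φ (y i) := fun i ↦
    congrArg Subtype.val ((rootsEquivRoots f E).apply_symm_apply (x i)).symm
  have hy : ∑ i, c i • y i = algebraMap F _ r := by
    apply φ.toRingHom.injective
    simpa [hx] using h
  have hσx : ∀ i, ((σ • x i : f.rootSet E) : E) = φ (σ (y i)) := fun i ↦ rfl
  calc ∑ i, c i • ((σ • x i : f.rootSet E) : E) = φ (σ (∑ i, c i • y i)) := by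
        simp [hσx, map_sum]
    _ = algebraMap F E r := by rw [hy]; exact (congrArg φ (σ.commutes r)).trans (φ.commutes r)

theorem Polynomial.exists_equiv_rootSet_of_map_eq_prod {K L : Type*} [Field K] [Field L]
    [Algebra K L] {f : K[X]} (hf : f.Separable) {ι : Type*} [Fintype ι] {α : ι → L}
    (h : f.map (algebraMap K L) = ∏ i, (X - C (α i))) :
    ∃ A : ι ≃ f.rootSet L, ∀ i, (A i : L) = α i := by
  classical
  have hmem : ∀ x, x ∈ f.rootSet L ↔ ∃ i, α i = x := fun x ↦ by
    rw [mem_rootSet, aeval_def, eval₂_eq_eval_map, h, eval_prod, prod_eq_zero_iff]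
    simp [hf.ne_zero, sub_eq_zero, eq_comm]
  have hinj : Function.Injective α := separable_prod_X_sub_C_iff.mp (h ▸ hf.map)
  refine ⟨Equiv.ofBijective (fun i ↦ ⟨α i, (hmem _).mpr ⟨i, rfl⟩⟩) ⟨?_, ?_⟩, fun _ ↦ rfl⟩
  · exact fun i j hij ↦ hinj (congrArg Subtype.val hij)
  · rintro ⟨x, hx⟩
    obtain ⟨i, rfl⟩ := (hmem x).mp hx
    exact ⟨i, rfl⟩

theorem Equiv.Perm.exists_equiv_zmod_of_orderOf_eq_card {X : Type*} [Fintype X] {p : ℕ}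
    [Fact p.Prime] {g : Perm X} (hcard : Fintype.card X = p) (hg : orderOf g = p) :
    ∃ e : ZMod p ≃ X, ∀ t (k : ℕ), e (t + k) = (g ^ k) (e t) := by
  classical
  have hcyc : g.IsCycle := isCycle_of_prime_order'' (hcard ▸ Fact.out) (hg.trans hcard.symm)
  have hsupp : g.support = univ := eq_univ_of_card _ (by rw [← hcyc.orderOf, hg, hcard])
  have hmoves : ∀ x, g x ≠ x := fun x ↦ mem_support.mp (hsupp ▸ mem_univ x)
  obtain ⟨x₀⟩ : Nonempty X := Fintype.card_pos_iff.mp (hcard ▸ (Fact.out : p.Prime).pos)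
  set e : ZMod p → X := fun t ↦ (g ^ t.val) x₀
  have he : ∀ k : ℕ, e k = (g ^ k) x₀ := fun k ↦ by
    simp only [e, ZMod.val_natCast, ← hg, pow_mod_orderOf]
  have hsurj : Function.Surjective e := fun x ↦ by
    obtain ⟨k, hk⟩ := hcyc.exists_pow_eq (hmoves x₀) (hmoves x)
    exact ⟨k, (he k).trans hk⟩
  refine ⟨Equiv.ofBijective e ((Fintype.bijective_iff_surjective_and_card e).mpr
    ⟨hsurj, by rw [ZMod.card, hcard]⟩), fun t k ↦ ?_⟩
  simp only [Equiv.ofBijective_apply]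
  rw [← ZMod.natCast_zmod_val t, ← Nat.cast_add, he, he, add_comm, pow_add, Perm.mul_apply]

theorem stmt_2_general (p : ℕ) (hp : p.Prime) (f : Polynomial ℚ)
    (hirr : Irreducible f) (hdeg : f.natDegree = p)
    (α : Fin p → ℂ)
    (hroots : f.map (algebraMap ℚ ℂ) = ∏ i, (Polynomial.X - Polynomial.C (α i)))
    (m : Fin p → ℤ) (m0 : ℤ)
    (hrel : ∑ i, (m i : ℂ) * α i = (m0 : ℂ)) :
    ∀ i j, m i = m j := by
  have : Fact p.Prime := ⟨hp⟩
  have : Fact ((f.map (algebraMap ℚ ℂ)).Splits) := ⟨IsAlgClosed.splits _⟩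
  obtain ⟨A, hA⟩ := exists_equiv_rootSet_of_map_eq_prod hirr.separable hroots
  obtain ⟨σ, hσ⟩ := exists_prime_orderOf_dvd_card' p
    (hdeg ▸ Gal.prime_degree_dvd_card hirr (hdeg ▸ hp))
  obtain ⟨e, he⟩ := Equiv.Perm.exists_equiv_zmod_of_orderOf_eq_card
    (hdeg ▸ card_rootSet_eq_natDegree hirr.separable (IsAlgClosed.splits _))
    ((orderOf_injective _ (Gal.galActionHom_injective f ℂ) σ).trans hσ)
  have hshift : ∀ j, ∑ t, ((m (A.symm (e t)) : ℚ) : ℂ) * (e (t + j) : ℂ) = m0 := by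
    intro j
    have hact : ∀ t, σ ^ j.val • e t = e (t + j) := fun t ↦ by
      have := (he t j.val).symm
      rwa [ZMod.natCast_zmod_val, ← map_pow] at this
    have hrelσ := Gal.sum_smul_smul_eq_algebraMap (σ ^ j.val) (fun i ↦ (m i : ℚ)) A (r := m0)
      (by simpa [hA, Rat.smul_def] using hrel)
    rw [← (e.trans A.symm).sum_comp] at hrelσ
    simpa [Rat.smul_def, hact] using hrelσ
  have hc := ZMod.eq_of_sum_mul_comp_add_eq_const (β := fun t ↦ (e t : ℂ))
    (c := fun t ↦ (m (A.symm (e t)) : ℚ))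
    ⟨0, 1, fun h ↦ zero_ne_one (e.injective (Subtype.ext h))⟩ hshift
  intro i j
  simpa using hc (e.symm (A i)) (e.symm (A j))

theorem stmt_2 (p : ℕ) (hp : p.Prime) (f : Polynomial ℚ) (hmonic : f.Monic)
    (hirr : Irreducible f) (hdeg : f.natDegree = p)
    (α : Fin p → ℂ)
    (hroots : f.map (algebraMap ℚ ℂ) = ∏ i, (Polynomial.X - Polynomial.C (α i)))
    (m : Fin p → ℤ) (m0 : ℤ)
    (hrel : ∑ i, (m i : ℂ) * α i = (m0 : ℂ)) :
    ∀ i j, m i = m j :=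
  stmt_2_general p hp f hirr hdeg α hroots m m0 hrel
end

section
/- Let f(x) be a monic irreducible polynomial over ℚ of degree n ≥ 4 whose Galois group, acting on the roots α_1, ..., α_n, is the alternating group A_n. If rational numbers m_1, ..., m_n, m satisfy ∑ m_i α_i = m, then m_1 = m_2 = ... = m_n. -/
/-!
If `g` realizes the 3-cycle `i ↦ j ↦ k ↦ i` on the roots, subtracting `g` of the relation from the
relation leaves `m_i (α_i - α_j) + m_j (α_j - α_k) + m_k (α_k - α_i) = 0`, and applying `g` once
more rotates the roots in it. Eliminating `α_k` between the two gives
`(p² + p q + q²) (α_i - α_j) = 0` with `p = m_i - m_k`, `q = m_k - m_j`; the roots are distinct and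
the quadratic form is definite, so `m_i = m_j = m_k`.
-/

open Polynomial Equiv Finset

theorem sq_add_mul_add_sq_eq_zero {F : Type*} [Field F] [LinearOrder F] [IsStrictOrderedRing F]
    {a b : F} (h : a ^ 2 + a * b + b ^ 2 = 0) : a = 0 ∧ b = 0 := by
  have hb : b = 0 := by nlinarith [sq_nonneg (2 * a + b), sq_nonneg b]
  subst hb
  exact ⟨by simpa using h, rfl⟩

theorem eq_of_cyclic_relations {F V : Type*} [Field F] [LinearOrder F] [IsStrictOrderedRing F]
    [AddCommGroup V] [Module F V] {x y z : V} (hxy : x ≠ y) {a b c : F}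
    (h₁ : a • (x - y) + b • (y - z) + c • (z - x) = 0)
    (h₂ : a • (y - z) + b • (z - x) + c • (x - y) = 0) : a = b ∧ b = c := by
  have key : ((a - c) ^ 2 + (a - c) * (c - b) + (c - b) ^ 2) • (x - y) = 0 := by
    linear_combination (norm := module) (a - b) • h₁ - (b - c) • h₂
  obtain ⟨hac, hcb⟩ : a - c = 0 ∧ c - b = 0 :=
    sq_add_mul_add_sq_eq_zero ((smul_eq_zero.mp key).resolve_right (sub_ne_zero.mpr hxy))
  exact ⟨by linear_combination hac + hcb, by linear_combination -hcb⟩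

theorem AlgHom.sum_smul_sub_eq_zero {F K ι : Type*} [Fintype ι] [CommRing F] [Ring K]
    [Algebra F K] (g : K →ₐ[F] K) {σ : ι → ι} {α : ι → K} (hg : ∀ i, g (α i) = α (σ i))
    {m : ι → F} {m₀ : F} (h : ∑ i, m i • α i = algebraMap F K m₀) :
    ∑ i, m i • (α i - α (σ i)) = 0 := by
  have hσ : ∑ i, m i • α (σ i) = algebraMap F K m₀ := by
    simpa [map_sum, hg] using congrArg g h
  simp only [smul_sub, sum_sub_distrib, h, hσ, sub_self]

theorem sum_smul_sub_swap_mul_swap {ι R V : Type*} [Fintype ι] [DecidableEq ι] [Ring R]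
    [AddCommGroup V] [Module R V] {i j k : ι} (hij : i ≠ j) (hjk : j ≠ k) (hik : i ≠ k)
    (w : ι → R) (v : ι → V) :
    ∑ s, w s • (v s - v ((swap i j * swap j k) s)) =
      w i • (v i - v j) + w j • (v j - v k) + w k • (v k - v i) := by
  have hsupp : (swap i j * swap j k).support = {i, j, k} :=
    Perm.support_swap_mul_swap (by simp [hij, hjk, hik])
  rw [← sum_subset (subset_univ _) fun s _ hs => by
    rw [Perm.notMem_support.mp hs, sub_self, smul_zero], hsupp,
    sum_insert (by simp [hij, hik]), sum_pair hjk]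
  simp [swap_apply_of_ne_of_ne, hij, hik, hjk.symm, hik.symm, add_assoc]

theorem stmt_4_general (n : ℕ) (hn : 4 ≤ n) (K : Type*) [Field K] [Algebra ℚ K]
    (f : Polynomial ℚ) (hirr : Irreducible f)
    (α : Fin n → K)
    (hroots : f.map (algebraMap ℚ K) = ∏ i, (Polynomial.X - Polynomial.C (α i)))
    (hGal : {σ : Equiv.Perm (Fin n) | ∃ g : K ≃ₐ[ℚ] K, ∀ i, g (α i) = α (σ i)}
      = (alternatingGroup (Fin n) : Set (Equiv.Perm (Fin n))))
    (m : Fin n → ℚ) (m0 : ℚ)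
    (hrel : ∑ i, algebraMap ℚ K (m i) * α i = algebraMap ℚ K m0) :
    ∀ i j, m i = m j := by
  intro i j
  rcases eq_or_ne i j with rfl | hij
  · rfl
  have hα : Function.Injective α :=
    separable_prod_X_sub_C_iff.mp (hroots ▸ hirr.separable.map)
  obtain ⟨k, hki, hkj⟩ : ∃ k, k ≠ i ∧ k ≠ j := Fin.exists_ne_and_ne_of_two_lt i j (by omega)
  set σ := swap i j * swap j k
  obtain ⟨g, hg⟩ : ∃ g : K ≃ₐ[ℚ] K, ∀ s, g (α s) = α (σ s) :=
    hGal.ge (Perm.mul_mem_alternatingGroup_of_isSwap ⟨i, j, hij, rfl⟩ ⟨j, k, hkj.symm, rfl⟩)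
  have h₁ : m i • (α i - α j) + m j • (α j - α k) + m k • (α k - α i) = 0 := by
    rw [← sum_smul_sub_swap_mul_swap hij hkj.symm hki.symm]
    exact g.toAlgHom.sum_smul_sub_eq_zero hg (by simpa only [Algebra.smul_def] using hrel)
  have h₂ : m i • (α j - α k) + m j • (α k - α i) + m k • (α i - α j) = 0 := by
    simpa [hg, σ, swap_apply_of_ne_of_ne, hij, hki, hki.symm, hkj] using congrArg g h₁
  exact (eq_of_cyclic_relations (hα.ne hij) h₁ h₂).1

theorem stmt_4 (n : ℕ) (hn : 4 ≤ n) (K : Type*) [Field K] [Algebra ℚ K]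
    (f : Polynomial ℚ) (hmonic : f.Monic) (hirr : Irreducible f) (hdeg : f.natDegree = n)
    (α : Fin n → K)
    (hroots : f.map (algebraMap ℚ K) = ∏ i, (Polynomial.X - Polynomial.C (α i)))
    (hGal : {σ : Equiv.Perm (Fin n) | ∃ g : K ≃ₐ[ℚ] K, ∀ i, g (α i) = α (σ i)}
      = (alternatingGroup (Fin n) : Set (Equiv.Perm (Fin n))))
    (m : Fin n → ℚ) (m0 : ℚ)
    (hrel : ∑ i, algebraMap ℚ K (m i) * α i = algebraMap ℚ K m0) :
    ∀ i j, m i = m j :=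
  stmt_4_general n hn K f hirr α hroots hGal m m0 hrel
end

section
/- Let f(x) = x^4 + a_3 x^3 + a_2 x^2 + a_1 x + a_0 be a monic irreducible polynomial over ℚ with roots α_1, α_2, α_3, α_4. If there exist rational numbers m_1, ..., m_4, m, not all m_i equal, with ∑ m_i α_i = m, then f is decomposable: f(x) = g(h(x)) for some quadratic polynomials g, h ∈ ℚ[x]. -/
/-!
The Galois group `G` of `f` acts transitively on the roots and maps rational relations among them
to rational relations. Subtracting from `∑ mᵢ αᵢ = m` its image under an element of `G` sending `j`
to `i`, where `mᵢ ≠ mⱼ`, gives a nonzero relation `∑ vᵢ αᵢ = 0` with `∑ vᵢ = 0`.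

By Burnside's lemma `G` contains a fixed-point-free permutation, hence a double transposition, say
`(0 1)(2 3)`. Adding the relation to its image under it gives `(v₀ + v₁)(α₀ + α₁ - α₂ - α₃) = 0`.
So either `α₀ + α₁ = α₂ + α₃`, or every such relation has the shape
`x (α₀ - α₁) + y (α₂ - α₃) = 0`. These relations form a line, since the roots are distinct. An
element of `G` sending `0` to `2` then acts on this line by a scalar that preserves `∑ vᵢ²`, so
the scalar is `±1`, and this forces `y = ±x`. That again splits the roots into two pairs with
equal sums.

Finally, if `α₀ + α₁ = α₂ + α₃ = s`, then `f = (X² + u X + w) ∘ (X² - s X)` with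
`u = α₀α₁ + α₂α₃` and `w = α₀α₁α₂α₃`. These are rational because `s = -a₃ / 2`.
-/

open Equiv Function Polynomial

def swapPairs : Perm (Fin 4) := swap 0 1 * swap 2 3

-- A derangement of four points is a double transposition or a 4-cycle, whose square is one.
theorem exists_conj_swapPairs_eq (e : Perm (Fin 4)) (he : ∀ x, e x ≠ x) :
    ∃ π : Perm (Fin 4), π * swapPairs * π⁻¹ = e ∨ π * swapPairs * π⁻¹ = e * e := by
  revert e
  unfold swapPairs
  decide

theorem MulAction.exists_forall_smul_ne (G α : Type*) [Group G] [Finite G] [MulAction G α]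
    [Finite α] [Nontrivial α] [IsPretransitive G α] : ∃ g : G, ∀ a : α, g • a ≠ a := by
  classical
  have := Fintype.ofFinite G
  have := Fintype.ofFinite α
  by_contra! h
  have hfix : ∀ g : G, 1 ≤ Fintype.card (fixedBy α g) := fun g ↦
    Fintype.card_pos_iff.mpr (let ⟨a, ha⟩ := h g; ⟨⟨a, ha⟩⟩)
  have hone : 1 < Fintype.card (fixedBy α (1 : G)) := by
    simpa [fixedBy] using Fintype.one_lt_card (α := α)
  have : Unique (orbitRel.Quotient G α) :=
    ((pretransitive_iff_unique_quotient_of_nonempty G α).mp inferInstance).some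
  have hburnside := sum_card_fixedBy_eq_card_orbits_mul_card_group G α
  rw [Fintype.card_unique, one_mul] at hburnside
  have := Finset.sum_lt_sum (s := Finset.univ) (fun g _ ↦ hfix g) ⟨1, Finset.mem_univ _, hone⟩
  rw [Finset.sum_const, Finset.card_univ, smul_eq_mul, mul_one, hburnside] at this
  exact lt_irrefl _ this

lemma Equiv.Perm.sum_smul_comp {R M ι : Type*} [Fintype ι] [AddCommMonoid M] [SMul R M]
    (π : Perm ι) (u : ι → R) (β : ι → M) : ∑ i, u i • β (π i) = ∑ i, u (π⁻¹ i) • β i := by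
  simpa using Equiv.sum_comp π (fun j ↦ u (π⁻¹ j) • β j)

section Relations

variable {k A ι : Type*} [Field k] [Ring A] [Algebra k A] [Fintype ι]

variable (k) in
def PreservesRelations (β : ι → A) (σ : Perm ι) : Prop :=
  ∀ (u : ι → k) (c : k), ∑ i, u i • β i = algebraMap k A c → ∑ i, u (σ i) • β i = algebraMap k A c

def HasEqualPairSums (β : Fin 4 → A) : Prop :=
  ∃ π : Perm (Fin 4), β (π 0) + β (π 1) = β (π 2) + β (π 3)

lemma preservesRelations_comp_iff {β : ι → A} (π σ : Perm ι) :
    PreservesRelations k (β ∘ π) σ ↔ PreservesRelations k β (π * σ * π⁻¹) := by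
  simp only [PreservesRelations, Function.comp_apply, Perm.sum_smul_comp, Perm.mul_apply]
  constructor
  · intro h u c hu
    simpa using h (fun i ↦ u (π i)) c (by simpa using hu)
  · intro h u c hu
    simpa using h (fun i ↦ u (π⁻¹ i)) c hu

lemma exists_relation_of_affine_relation {β : ι → A} (H : Subgroup (Perm ι))
    [MulAction.IsPretransitive H ι] (hH : ∀ σ ∈ H, PreservesRelations k β σ) {m : ι → k} {c : k}
    (hm : ∑ i, m i • β i = algebraMap k A c) (hne : ∃ i j, m i ≠ m j) :
    ∃ v : ι → k, v ≠ 0 ∧ ∑ i, v i = 0 ∧ ∑ i, v i • β i = 0 := by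
  obtain ⟨i, j, hij⟩ := hne
  obtain ⟨⟨σ, hσH⟩, hσ⟩ := MulAction.exists_smul_eq H j i
  refine ⟨fun l ↦ m (σ l) - m l, fun h ↦ hij ?_, ?_, ?_⟩
  · simpa [← hσ, sub_eq_zero] using congrFun h j
  · rw [Finset.sum_sub_distrib, Equiv.sum_comp σ m, sub_self]
  · simp only [sub_smul, Finset.sum_sub_distrib, hH σ hσH m c hm, hm, sub_self]

variable {β : Fin 4 → A}

lemma add_eq_add_of_preservesRelations_swapPairs (hτ : PreservesRelations k β swapPairs)
    {u : Fin 4 → k} (hsum : ∑ i, u i = 0) (hrel : ∑ i, u i • β i = 0) (hu : u 0 + u 1 ≠ 0) :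
    β 0 + β 1 = β 2 + β 3 := by
  have hτu := hτ u 0 (hrel.trans (map_zero _).symm)
  rw [map_zero] at hτu
  simp only [Fin.sum_univ_four, show swapPairs 0 = 1 by decide, show swapPairs 1 = 0 by decide,
    show swapPairs 2 = 3 by decide, show swapPairs 3 = 2 by decide] at hτu hrel hsum
  have : (u 0 + u 1) • (β 0 + β 1 - (β 2 + β 3)) = 0 := by
    linear_combination (norm := module) hrel + hτu - hsum • (β 2 + β 3)
  exact sub_eq_zero.mp ((smul_eq_zero.mp this).resolve_left hu)

variable [LinearOrder k] [IsStrictOrderedRing k]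

lemma hasEqualPairSums_of_antisymmetric_relations (hβ : Injective β) {x y z : k}
    (hx : x ≠ 0) (hA : x • (β 0 - β 1) + y • (β 2 - β 3) = 0)
    (hB : y • (β 0 - β 1) + z • (β 2 - β 3) = 0) (hz : z ^ 2 = x ^ 2) :
    HasEqualPairSums β := by
  have h23 : β 2 - β 3 ≠ 0 := sub_ne_zero.mpr (hβ.ne (by decide))
  have hdet : (x * z - y ^ 2) • (β 2 - β 3) = 0 := by
    linear_combination (norm := module) x • hB - y • hA
  have hxz : x * z = y ^ 2 := sub_eq_zero.mp ((smul_eq_zero.mp hdet).resolve_right h23)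
  rcases sq_eq_sq_iff_eq_or_eq_neg.mp hz with hzx | hzx
  · rw [hzx, ← sq] at hxz
    rcases sq_eq_sq_iff_eq_or_eq_neg.mp hxz with hyx | hyx
    · refine ⟨swap 1 2, ?_⟩
      rw [← hyx] at hA
      have : x • (β 0 + β 2 - (β 1 + β 3)) = 0 := by linear_combination (norm := module) hA
      simpa [swap_apply_of_ne_of_ne, sub_eq_zero] using (smul_eq_zero.mp this).resolve_left hx
    · refine ⟨swap 1 3 * swap 2 3, ?_⟩
      rw [show y = -x by linear_combination hyx] at hA
      have : x • (β 0 + β 3 - (β 1 + β 2)) = 0 := by linear_combination (norm := module) hA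
      simpa [swap_apply_of_ne_of_ne, sub_eq_zero] using (smul_eq_zero.mp this).resolve_left hx
  · rw [hzx] at hxz
    nlinarith [sq_nonneg y, sq_pos_of_ne_zero hx]

theorem hasEqualPairSums_of_preservesRelations_swapPairs (hβ : Injective β)
    (hτ : PreservesRelations k β swapPairs) {σ : Perm (Fin 4)} (hσ : PreservesRelations k β σ)
    (hσ0 : σ 0 = 2) {v : Fin 4 → k} (hv : v ≠ 0) (hsum : ∑ i, v i = 0)
    (hrel : ∑ i, v i • β i = 0) : HasEqualPairSums β := by
  obtain hv01 | hv01 := ne_or_eq (v 0 + v 1) 0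
  · exact ⟨1, add_eq_add_of_preservesRelations_swapPairs hτ hsum hrel hv01⟩
  have hwsum : ∑ i, v (σ i) = 0 := (Equiv.sum_comp σ v).trans hsum
  have hwrel : ∑ i, v (σ i) • β i = 0 := by
    simpa using hσ v 0 (hrel.trans (map_zero _).symm)
  obtain hw01 | hw01 := ne_or_eq (v (σ 0) + v (σ 1)) 0
  · exact ⟨1, add_eq_add_of_preservesRelations_swapPairs hτ hwsum hwrel hw01⟩
  have hsq : ∑ i, v (σ i) ^ 2 = ∑ i, v i ^ 2 := Equiv.sum_comp σ (fun i ↦ v i ^ 2)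
  rw [hσ0] at hw01
  simp only [Fin.sum_univ_four] at hsum hrel hwsum hwrel hsq
  rw [hσ0] at hwrel hwsum hsq
  have h1 : v 1 = -v 0 := by linear_combination hv01
  have h3 : v 3 = -v 2 := by linear_combination hsum - hv01
  have hA : v 0 • (β 0 - β 1) + v 2 • (β 2 - β 3) = 0 := by
    rw [h1, h3] at hrel
    linear_combination (norm := module) hrel
  have hB : v 2 • (β 0 - β 1) + v (σ 2) • (β 2 - β 3) = 0 := by
    linear_combination (norm := module) hwrel - hw01 • β 1 - (hwsum - hw01) • β 3
  have hv0 : v 0 ≠ 0 := by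
    intro h0
    rw [h0, zero_smul, zero_add] at hA
    have h2 : v 2 = 0 := (smul_eq_zero.mp hA).resolve_right (sub_ne_zero.mpr (hβ.ne (by decide)))
    exact hv (funext fun i ↦ by fin_cases i <;> simp [h0, h1, h2, h3])
  refine hasEqualPairSums_of_antisymmetric_relations hβ hv0 hA hB ?_
  rw [h1, h3, show v (σ 1) = -v 2 by linear_combination hw01,
    show v (σ 3) = -v (σ 2) by linear_combination hwsum - hw01] at hsq
  linear_combination hsq / 2

theorem hasEqualPairSums_of_isPretransitive (hβ : Injective β)
    (H : Subgroup (Perm (Fin 4))) [MulAction.IsPretransitive H (Fin 4)]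
    (hH : ∀ σ ∈ H, PreservesRelations k β σ)
    {m : Fin 4 → k} {c : k} (hm : ∑ i, m i • β i = algebraMap k A c) (hne : ∃ i j, m i ≠ m j) :
    HasEqualPairSums β := by
  obtain ⟨v, hv, hsum, hrel⟩ := exists_relation_of_affine_relation H hH hm hne
  obtain ⟨⟨e, heH⟩, he⟩ := MulAction.exists_forall_smul_ne H (Fin 4)
  obtain ⟨π, hπ⟩ := exists_conj_swapPairs_eq e he
  have hτH : π * swapPairs * π⁻¹ ∈ H := hπ.elim (· ▸ heH) (· ▸ H.mul_mem heH heH)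
  obtain ⟨⟨σ, hσH⟩, hσ⟩ := MulAction.exists_smul_eq H (π 0) (π 2)
  replace hσ : σ (π 0) = π 2 := hσ
  -- Relabel the roots by `π`, turning the double transposition in `H` into `swapPairs`.
  obtain ⟨π', hπ'⟩ := hasEqualPairSums_of_preservesRelations_swapPairs (β := β ∘ π)
    (hβ.comp π.injective) ((preservesRelations_comp_iff π _).mpr (hH _ hτH))
    (σ := π⁻¹ * σ * π)
    ((preservesRelations_comp_iff π _).mpr (by simpa [mul_assoc] using hH σ hσH))
    (by simp [hσ]) (v := v ∘ π)
    (fun h ↦ hv (funext fun i ↦ by simpa using congrFun h (π⁻¹ i)))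
    ((Equiv.sum_comp π v).trans hsum) ((Equiv.sum_comp π (fun i ↦ v i • β i)).trans hrel)
  exact ⟨π * π', hπ'⟩

end Relations

namespace Polynomial.Gal

variable {F E ι : Type*} [Field F] [Field E] [Algebra F E] {p : F[X]}
  [Fact ((p.map (algebraMap F E)).Splits)]

theorem sum_smul_coe_smul_eq_algebraMap [Fintype ι] (σ : p.Gal) (x : ι → p.rootSet E)
    {u : ι → F} {c : F}
    (h : ∑ i, u i • (x i : E) = algebraMap F E c) :
    ∑ i, u i • ((σ • x i : p.rootSet E) : E) = algebraMap F E c := by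
  let j := IsScalarTower.toAlgHom F p.SplittingField E
  let y i := ((rootsEquivRoots p E).symm (x i) : p.SplittingField)
  have hx : ∀ i, (x i : E) = j (y i) := fun i ↦
    congrArg Subtype.val ((rootsEquivRoots p E).apply_symm_apply (x i)).symm
  have hy : ∑ i, u i • y i = algebraMap F _ c := by
    apply j.injective
    simpa [map_sum, map_smul, hx] using h
  have hσx : ∀ i, ((σ • x i : p.rootSet E) : E) = j (σ (y i)) := fun i ↦ rfl
  calc ∑ i, u i • ((σ • x i : p.rootSet E) : E) = j (σ (∑ i, u i • y i)) := by
        simp only [hσx, map_sum, map_smul]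
    _ = algebraMap F E c := by rw [hy]; exact (congrArg j (σ.commutes c)).trans (j.commutes c)

noncomputable def permOfEquiv (e : ι ≃ p.rootSet E) : p.Gal →* Perm ι :=
  (e.symm.permCongrHom : Perm (p.rootSet E) ≃* Perm ι).toMonoidHom.comp (galActionHom p E)

lemma permOfEquiv_apply (e : ι ≃ p.rootSet E) (σ : p.Gal) (i : ι) :
    e (permOfEquiv e σ i) = σ • e i := by
  simp [permOfEquiv, galActionHom, Equiv.permCongr]

theorem preservesRelations_permOfEquiv [Fintype ι] (e : ι ≃ p.rootSet E) (σ : p.Gal) :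
    PreservesRelations F (fun i ↦ (e i : E)) (permOfEquiv e σ) := by
  intro u c h
  rw [← sum_smul_coe_smul_eq_algebraMap σ⁻¹ e h]
  simp only [← permOfEquiv_apply]
  rw [Perm.sum_smul_comp (permOfEquiv e σ⁻¹) u (fun i ↦ (e i : E)), ← map_inv, inv_inv]

theorem isPretransitive_range_permOfEquiv (hp : Irreducible p) (e : ι ≃ p.rootSet E) :
    MulAction.IsPretransitive (permOfEquiv e).range ι := by
  have := galAction_isPretransitive p E hp
  refine ⟨fun i j ↦ ?_⟩
  obtain ⟨σ, hσ⟩ := MulAction.exists_smul_eq p.Gal (e i) (e j)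
  exact ⟨⟨_, σ, rfl⟩, e.injective ((permOfEquiv_apply e σ i).trans hσ)⟩

end Polynomial.Gal

theorem Polynomial.rootSet_eq_range_of_map_eq_prod {F E ι : Type*} [Field F] [Field E]
    [Algebra F E] [Fintype ι] {p : F[X]} {α : ι → E}
    (h : p.map (algebraMap F E) = ∏ i, (X - C (α i))) : p.rootSet E = Set.range α := by
  ext z
  rw [mem_rootSet', aeval_def, ← eval_map, h, eval_prod]
  simp [Finset.prod_eq_zero_iff, sub_eq_zero, eq_comm (a := z),
    (monic_prod_of_monic _ _ fun i _ ↦ monic_X_sub_C (α i)).ne_zero]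

theorem Polynomial.eq_comp_of_map_eq_prod {F E : Type*} [Field F] [NeZero (2 : F)] [Field E]
    [Algebra F E] {f : F[X]} {a b c d : E}
    (hf : f.map (algebraMap F E) = (X - C a) * (X - C b) * (X - C c) * (X - C d))
    (hpair : a + b = c + d) :
    f = (X ^ 2 + C (f.coeff 2 - (f.coeff 3 / 2) ^ 2) * X + C (f.coeff 0)).comp
      (X ^ 2 + C (f.coeff 3 / 2) * X) := by
  obtain rfl : d = a + b - c := by linear_combination -hpair
  have hexp : f.map (algebraMap F E) = X ^ 4 - C (2 * (a + b)) * X ^ 3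
      + C ((a + b) ^ 2 + (a * b + c * (a + b - c))) * X ^ 2
      - C ((a + b) * (a * b + c * (a + b - c))) * X + C (a * b * (c * (a + b - c))) := by
    rw [hf]
    simp only [C_mul, C_add, C_sub, C_pow, C_ofNat]
    ring
  have hcoeff (n : ℕ) := (coeff_map (algebraMap F E) n).symm.trans (congrArg (coeff · n) hexp)
  have h3 := hcoeff 3
  have h2 := hcoeff 2
  have h0 := hcoeff 0
  simp only [coeff_add, coeff_sub, coeff_C_mul, coeff_X_pow, coeff_C, coeff_X] at h3 h2 h0
  norm_num at h3 h2 h0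
  have h2E : (2 : E) ≠ 0 := by
    rw [← map_ofNat (algebraMap F E) 2]; exact (_root_.map_ne_zero _).mpr two_ne_zero
  have hs : algebraMap F E (f.coeff 3 / 2) = -(a + b) := by
    rw [map_div₀, h3, map_ofNat]; field_simp
  have hu : algebraMap F E (f.coeff 2 - (f.coeff 3 / 2) ^ 2) = a * b + c * (a + b - c) := by
    rw [map_sub, map_pow, hs, h2]; ring
  apply map_injective (algebraMap F E) (algebraMap F E).injective
  simp only [Polynomial.map_add, Polynomial.map_mul, Polynomial.map_pow,
    map_X, map_C, hs, hu, h0, hexp, add_comp, mul_comp, pow_comp, X_comp, C_comp]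
  simp only [C_mul, C_add, C_sub, C_pow, C_ofNat, C_neg]
  ring

theorem stmt_5_general (f : Polynomial ℚ) (hirr : Irreducible f) (α : Fin 4 → ℂ)
    (hroots : f.map (algebraMap ℚ ℂ) = ∏ i, (Polynomial.X - Polynomial.C (α i)))
    (m : Fin 4 → ℚ) (m0 : ℚ)
    (hrel : ∑ i, (m i : ℂ) * α i = (m0 : ℂ))
    (hne : ∃ i j, m i ≠ m j) :
    ∃ g h : Polynomial ℚ, g.natDegree = 2 ∧ h.natDegree = 2 ∧ f = g.comp h := by
  have hα : Injective α := separable_prod_X_sub_C_iff.mp (hroots ▸ hirr.separable.map)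
  have : Fact ((f.map (algebraMap ℚ ℂ)).Splits) := ⟨IsAlgClosed.splits _⟩
  let e : Fin 4 ≃ f.rootSet ℂ := (Equiv.ofInjective α hα).trans
    (Equiv.setCongr (rootSet_eq_range_of_map_eq_prod hroots).symm)
  have := Gal.isPretransitive_range_permOfEquiv hirr e
  obtain ⟨π, hπ⟩ : HasEqualPairSums α := hasEqualPairSums_of_isPretransitive hα
    (Gal.permOfEquiv e).range (by rintro _ ⟨σ, rfl⟩; exact Gal.preservesRelations_permOfEquiv e σ)
    (by simpa only [Rat.smul_def, eq_ratCast] using hrel) hne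
  refine ⟨_, _, by compute_degree!, by compute_degree!, eq_comp_of_map_eq_prod ?_ hπ⟩
  rw [hroots, ← Equiv.prod_comp π, Fin.prod_univ_four]

theorem stmt_5 (f : Polynomial ℚ) (hmonic : f.Monic) (hirr : Irreducible f)
    (hdeg : f.natDegree = 4) (α : Fin 4 → ℂ)
    (hroots : f.map (algebraMap ℚ ℂ) = ∏ i, (Polynomial.X - Polynomial.C (α i)))
    (m : Fin 4 → ℚ) (m0 : ℚ)
    (hrel : ∑ i, (m i : ℂ) * α i = (m0 : ℂ))
    (hne : ∃ i j, m i ≠ m j) :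
    ∃ g h : Polynomial ℚ, g.natDegree = 2 ∧ h.natDegree = 2 ∧ f = g.comp h :=
  stmt_5_general f hirr α hroots m m0 hrel hne
end

section
/- Let f(x) = (x²+ax)² + b(x²+ax) + c with a, b, c ∈ ℤ be irreducible over ℚ. Write x² + bx + c = (x-β_1)(x-β_2) and x² + ax - β_i = (x-α_{i,1})(x-α_{i,2}) for i = 1, 2. Then the space of linear relations {(l_1,l_2,l_3,l_4,l_5) ∈ ℚ⁵ : l_1 α_{1,1} + l_2 α_{1,2} + l_3 α_{2,1} + l_4 α_{2,2} = l_5} is 2-dimensional, spanned by the relations α_{1,1} + α_{1,2} = -a and α_{2,1} + α_{2,2} = -a. -/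
/-!
Since `f` is irreducible and `α₁₁² + a α₁₁ = β₁` is a root of `x² + bx + c`, `f` is the minimal
polynomial of `α₁₁`, of degree 4. Given a relation `q α₁₁ + r α₂₁ = s`, substituting it into
`α₂₁² + a α₂₁ = β₂ = -b - β₁` yields a rational polynomial of degree at most 2 with leading
coefficient `q² + r²` vanishing at `α₁₁`; hence `q = r = s = 0`. So `1, α₁₁, α₂₁` are linearly
independent over `ℚ`, and as `α_{i,2} = -a - α_{i,1}`, every relation is a combination of the two
trace relations.
-/

open Polynomial

theorem minpoly.eq_zero_of_aeval_eq_zero_of_natDegree_lt {K L : Type*} [Field K] [Ring L]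
    [Algebra K L] {x : L} {p : K[X]} (hp : Polynomial.aeval x p = 0)
    (hdeg : p.natDegree < (minpoly K x).natDegree) : p = 0 := by
  by_contra hp0
  exact hdeg.not_ge (natDegree_le_natDegree (minpoly.degree_le_of_ne_zero K x hp0 hp))

theorem Polynomial.add_eq_neg_and_mul_eq_of_quadratic_eq {R : Type*} [CommRing R]
    {p q r s : R} (h : X ^ 2 + C p * X + C q = (X - C r) * (X - C s)) :
    r + s = -p ∧ r * s = q := by
  have h0 := congrArg (eval 0) h
  have h1 := congrArg (eval 1) h
  simp only [eval_add, eval_mul, eval_sub, eval_pow, eval_X, eval_C] at h0 h1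
  constructor
  · linear_combination h1 - h0
  · linear_combination -h0

section DecomposableQuartic

variable {L : Type*} [Field L] [CharZero L] {a b c : ℚ} {β₀ β₁ x y : L}

theorem natDegree_minpoly_eq_four
    (hf : Irreducible ((X ^ 2 + C a * X) ^ 2 + C b * (X ^ 2 + C a * X) + C c))
    (hβ₀ : β₀ ^ 2 + b * β₀ + c = 0) (hx : x ^ 2 + a * x = β₀) :
    (minpoly ℚ x).natDegree = 4 := by
  have hmonic : ((X ^ 2 + C a * X) ^ 2 + C b * (X ^ 2 + C a * X) + C c).Monic := by monicity!
  rw [← minpoly.eq_of_irreducible_of_monic hf (by simp [hx, hβ₀]) hmonic]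
  compute_degree!

theorem eq_zero_of_mul_add_mul_eq
    (hf : Irreducible ((X ^ 2 + C a * X) ^ 2 + C b * (X ^ 2 + C a * X) + C c))
    (hβ₀ : β₀ ^ 2 + b * β₀ + c = 0) (hβ : β₀ + β₁ = -b)
    (hx : x ^ 2 + a * x = β₀) (hy : y ^ 2 + a * y = β₁)
    {q r s : ℚ} (h : q * x + r * y = s) : q = 0 ∧ r = 0 ∧ s = 0 := by
  set p : ℚ[X] := C (q ^ 2 + r ^ 2) * X ^ 2 + C (a * r ^ 2 - 2 * s * q - a * r * q) * X
    + C (s ^ 2 + a * r * s + b * r ^ 2) with hp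
  -- substitute `r * y = s - q * x` into `r ^ 2 * (y ^ 2 + a * y) = r ^ 2 * (-b - x ^ 2 - a * x)`
  have hpx : Polynomial.aeval x p = 0 := by
    simp only [hp, map_add, map_mul, map_pow, aeval_X, aeval_C, eq_ratCast]
    push_cast
    linear_combination (r ^ 2 : L) * (hy + hx + hβ) - ((r : L) * y + s - q * x + a * r) * h
  have hp0 : p = 0 := minpoly.eq_zero_of_aeval_eq_zero_of_natDegree_lt hpx <| by
    rw [natDegree_minpoly_eq_four hf hβ₀ hx]
    have : p.natDegree ≤ 2 := by rw [hp]; compute_degree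
    omega
  have h2 : q ^ 2 + r ^ 2 = 0 := by
    simpa [hp, coeff_X, coeff_C, -map_add, -map_pow] using congrArg (coeff · 2) hp0
  have h0 : s ^ 2 + a * r * s + b * r ^ 2 = 0 := by
    simpa [hp, coeff_X, coeff_C, -map_add, -map_pow] using congrArg (coeff · 0) hp0
  obtain ⟨rfl, rfl⟩ : q = 0 ∧ r = 0 := by
    constructor <;> nlinarith [sq_nonneg q, sq_nonneg r]
  exact ⟨rfl, rfl, by simpa using h0⟩

end DecomposableQuartic

theorem linearRelations_iff {L : Type*} [Field L] [CharZero L] {a : ℚ} {x₀ x₁ y₀ y₁ : L}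
    (hx : x₀ + x₁ = -a) (hy : y₀ + y₁ = -a)
    (hind : ∀ q r s : ℚ, q * x₀ + r * y₀ = s → q = 0 ∧ r = 0 ∧ s = 0) (l : Fin 5 → ℚ) :
    (l 0 : L) * x₀ + l 1 * x₁ + l 2 * y₀ + l 3 * y₁ = l 4 ↔
      ∃ q r : ℚ, l = q • ![1, 1, 0, 0, -a] + r • ![0, 0, 1, 1, -a] := by
  constructor
  · intro hl
    obtain ⟨h01, h23, h4⟩ := hind (l 0 - l 1) (l 2 - l 3) (l 4 + (l 1 + l 3) * a) <| by
      push_cast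
      linear_combination hl - (l 1 : L) * hx - (l 3 : L) * hy
    have h4' : l 4 = -(l 0 * a) + -(l 2 * a) := by linear_combination h4 + a * h01 + a * h23
    refine ⟨l 0, l 2, funext fun i => ?_⟩
    fin_cases i <;> simp [h4'] <;> linarith
  · rintro ⟨q, r, rfl⟩
    simp only [Pi.add_apply, Pi.smul_apply, smul_eq_mul, Matrix.cons_val]
    push_cast
    linear_combination (q : L) * hx + (r : L) * hy

theorem linearIndependent_sum_relations (a : ℚ) :
    LinearIndependent ℚ ![![1, 1, 0, 0, -a], ![0, 0, 1, 1, -a]] := by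
  rw [LinearIndependent.pair_iff]
  intro s t h
  exact ⟨by simpa using congrFun h 0, by simpa using congrFun h 2⟩

open Polynomial in
theorem stmt_6 (a b c : ℤ)
    (hf : Irreducible (((X ^ 2 + C (a : ℚ) * X) ^ 2 + C (b : ℚ) * (X ^ 2 + C (a : ℚ) * X)
      + C (c : ℚ)) : Polynomial ℚ))
    (β : Fin 2 → ℂ) (α : Fin 2 → Fin 2 → ℂ)
    (hβ : (X ^ 2 + C (b : ℂ) * X + C (c : ℂ) : Polynomial ℂ)
      = (X - C (β 0)) * (X - C (β 1)))
    (hα : ∀ i, (X ^ 2 + C (a : ℂ) * X - C (β i) : Polynomial ℂ)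
      = (X - C (α i 0)) * (X - C (α i 1))) :
    LinearIndependent ℚ ![![1, 1, 0, 0, -(a : ℚ)], ![0, 0, 1, 1, -(a : ℚ)]] ∧
    ∀ l : Fin 5 → ℚ,
      ((l 0 : ℂ) * α 0 0 + (l 1 : ℂ) * α 0 1 + (l 2 : ℂ) * α 1 0 + (l 3 : ℂ) * α 1 1
        = (l 4 : ℂ))
      ↔ ∃ q r : ℚ, l = q • ![1, 1, 0, 0, -(a : ℚ)] + r • ![0, 0, 1, 1, -(a : ℚ)] := by
  obtain ⟨hβsum, hβprod⟩ := add_eq_neg_and_mul_eq_of_quadratic_eq hβ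
  have hαvieta (i : Fin 2) : α i 0 + α i 1 = -a ∧ α i 0 * α i 1 = -β i :=
    add_eq_neg_and_mul_eq_of_quadratic_eq (by rw [C_neg, ← sub_eq_add_neg, hα i])
  have hroot i : α i 0 ^ 2 + ((a : ℚ) : ℂ) * α i 0 = β i := by
    push_cast; linear_combination α i 0 * (hαvieta i).1 - (hαvieta i).2
  have hind (q r s : ℚ) : (q : ℂ) * α 0 0 + r * α 1 0 = s → q = 0 ∧ r = 0 ∧ s = 0 :=
    eq_zero_of_mul_add_mul_eq hf (by push_cast; linear_combination β 0 * hβsum - hβprod)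
      (by push_cast; exact hβsum) (hroot 0) (hroot 1)
  refine ⟨linearIndependent_sum_relations _, linearRelations_iff ?_ ?_ hind⟩
  · push_cast; exact (hαvieta 0).1
  · push_cast; exact (hαvieta 1).1
end

section
/- Let K/ℚ be Galois with group G and α a primitive element of K, δ = |G|^{-1}∑_g g, and V = span{g - δ : g ∈ G} ⊆ ℂ[G]. For M ∈ ℚ[G], one has M[α] ∈ ℚ (where M[α] = ∑ m_g g(α)) if and only if M·(∑_{g∈G} g(α) g^{-1})·V = 0. -/
/-!
The coefficient of `M · ∑ g(α) g⁻¹` at `σ` is `σ⁻¹(M[α])`. An element of `ℂ[G]` annihilates `V`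
exactly when it is invariant under right multiplication by `G`, i.e. when its coefficients are
constant. So the condition says that `M[α]` is fixed by every automorphism, which by Galois
theory means `M[α] ∈ ℚ`.
-/

namespace MonoidAlgebra

variable {k G : Type*}

lemma coeff_sum_single [Semiring k] [Fintype G] (a : G → k) (g : G) :
    (∑ h, single h (a h)).coeff g = a g := by
  classical
  simp [coeff_sum, coeff_single, Finsupp.single_apply]

variable [Group G] [Fintype G]

section Semiring
variable [Semiring k]

lemma coeff_sum_single_mul_sum_single_inv (a b : G → k) (g : G) :
    ((∑ h, single h (a h)) * ∑ h, single h⁻¹ (b h)).coeff g = ∑ h, a (g * h) * b h := by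
  rw [Finset.mul_sum, coeff_sum, Finsupp.finsetSum_apply]
  simp only [coeff_mul_single_apply, inv_inv, coeff_sum_single]

omit [Fintype G] in
lemma forall_mul_single_one_eq_self_iff (x : MonoidAlgebra k G) :
    (∀ g, x * single g 1 = x) ↔ ∀ g, x.coeff g = x.coeff 1 := by
  refine ⟨fun h g => ?_, fun h g => ?_⟩
  · simpa using congrArg (coeff · 1) (h g⁻¹)
  · ext g'
    rw [coeff_mul_single_apply, mul_one, h, h g']

end Semiring

lemma forall_mul_mem_span_single_sub_average_eq_zero_iff [Field k]
    (hcard : (Fintype.card G : k) ≠ 0) (x : MonoidAlgebra k G) :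
    (∀ v ∈ Submodule.span k
        {v | ∃ g, v = single g (1 : k) - (Fintype.card G : k)⁻¹ • ∑ h, single h 1},
        x * v = 0) ↔
      ∀ g, x * single g 1 = x := by
  set δ : MonoidAlgebra k G := (Fintype.card G : k)⁻¹ • ∑ h, single h 1
  constructor
  · intro h g
    have hg : ∀ g, x * single g 1 = x * δ := fun g => by
      simpa [mul_sub, sub_eq_zero] using h _ (Submodule.subset_span ⟨g, rfl⟩)
    rw [hg g, ← hg 1, ← one_def, mul_one]
  · intro h
    have hδ : x * δ = x := by
      simp [δ, Finset.mul_sum, h, ← Nat.cast_smul_eq_nsmul k, smul_smul, hcard]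
    intro v hv
    refine Submodule.span_induction ?_ (by simp) (fun _ _ _ _ h₁ h₂ => by simp [mul_add, h₁, h₂])
      (fun c _ _ h₁ => by simp [h₁]) hv
    rintro _ ⟨g, rfl⟩
    rw [mul_sub, h, hδ, sub_self]

end MonoidAlgebra

lemma AlgEquiv.map_sum_smul_apply {F E : Type*} [CommSemiring F] [Semiring E] [Algebra F E]
    [Fintype (E ≃ₐ[F] E)] (m : (E ≃ₐ[F] E) → F) (x : E) (σ : E ≃ₐ[F] E) :
    σ (∑ h, m h • h x) = ∑ h, m (σ⁻¹ * h) • h x := by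
  rw [map_sum]
  exact Fintype.sum_equiv (Equiv.mulLeft σ) _ _ fun h => by simp [AlgEquiv.mul_apply]

theorem stmt_9_general (K₀ : IntermediateField ℚ ℂ) [FiniteDimensional ℚ ↥K₀] [IsGalois ℚ ↥K₀]
    (α : ↥K₀)
    (δ : MonoidAlgebra ℂ (↥K₀ ≃ₐ[ℚ] ↥K₀))
    (hδ : δ = (Fintype.card (↥K₀ ≃ₐ[ℚ] ↥K₀) : ℂ)⁻¹ •
      ∑ g : ↥K₀ ≃ₐ[ℚ] ↥K₀, MonoidAlgebra.single g (1 : ℂ))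
    (V : Submodule ℂ (MonoidAlgebra ℂ (↥K₀ ≃ₐ[ℚ] ↥K₀)))
    (hV : V = Submodule.span ℂ
      {v | ∃ g : ↥K₀ ≃ₐ[ℚ] ↥K₀, v = MonoidAlgebra.single g (1 : ℂ) - δ})
    (m : (↥K₀ ≃ₐ[ℚ] ↥K₀) → ℚ) :
    (∃ q : ℚ, ∑ h : ↥K₀ ≃ₐ[ℚ] ↥K₀, (m h : ℂ) * ((h α : ↥K₀) : ℂ) = (q : ℂ))
    ↔ ∀ v ∈ V,
        ((∑ h : ↥K₀ ≃ₐ[ℚ] ↥K₀, MonoidAlgebra.single h ((m h : ℂ)))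
          * (∑ g : ↥K₀ ≃ₐ[ℚ] ↥K₀, MonoidAlgebra.single (g⁻¹) ((g α : ↥K₀) : ℂ))
          * v : MonoidAlgebra ℂ (↥K₀ ≃ₐ[ℚ] ↥K₀)) = 0 := by
  set s : K₀ := ∑ h, m h • h α
  have hcoeff : ∀ σ : K₀ ≃ₐ[ℚ] K₀,
      ∑ h, (m (σ * h) : ℂ) * ((h α : K₀) : ℂ) = ((σ⁻¹ s : K₀) : ℂ) := fun σ => by
    rw [AlgEquiv.map_sum_smul_apply, inv_inv]
    push_cast [Rat.smul_def]
    rfl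
  have hs : ∑ h, (m h : ℂ) * ((h α : K₀) : ℂ) = (s : ℂ) := by simpa using hcoeff 1
  subst hV hδ
  rw [MonoidAlgebra.forall_mul_mem_span_single_sub_average_eq_zero_iff
      (Nat.cast_ne_zero.mpr Fintype.card_ne_zero),
    MonoidAlgebra.forall_mul_single_one_eq_self_iff]
  simp only [MonoidAlgebra.coeff_sum_single_mul_sum_single_inv, hcoeff, hs, inv_one,
    AlgEquiv.one_apply]
  calc (∃ q : ℚ, (s : ℂ) = q) ↔ s ∈ Set.range (algebraMap ℚ K₀) := by
        simp only [Set.mem_range, eq_ratCast, eq_comm (b := s), ← Subtype.coe_inj,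
          SubfieldClass.coe_ratCast]
    _ ↔ ∀ σ : K₀ ≃ₐ[ℚ] K₀, σ s = s := IsGalois.mem_range_algebraMap_iff_fixed s
    _ ↔ ∀ σ : K₀ ≃ₐ[ℚ] K₀, ((σ⁻¹ s : K₀) : ℂ) = s := by
        rw [inv_surjective.forall]
        simp only [Subtype.coe_inj]

theorem stmt_9 (K₀ : IntermediateField ℚ ℂ) [FiniteDimensional ℚ ↥K₀] [IsGalois ℚ ↥K₀]
    (α : ↥K₀) (hα : IntermediateField.adjoin ℚ {α} = ⊤)
    (δ : MonoidAlgebra ℂ (↥K₀ ≃ₐ[ℚ] ↥K₀))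
    (hδ : δ = (Fintype.card (↥K₀ ≃ₐ[ℚ] ↥K₀) : ℂ)⁻¹ •
      ∑ g : ↥K₀ ≃ₐ[ℚ] ↥K₀, MonoidAlgebra.single g (1 : ℂ))
    (V : Submodule ℂ (MonoidAlgebra ℂ (↥K₀ ≃ₐ[ℚ] ↥K₀)))
    (hV : V = Submodule.span ℂ
      {v | ∃ g : ↥K₀ ≃ₐ[ℚ] ↥K₀, v = MonoidAlgebra.single g (1 : ℂ) - δ})
    (m : (↥K₀ ≃ₐ[ℚ] ↥K₀) → ℚ) :
    (∃ q : ℚ, ∑ h : ↥K₀ ≃ₐ[ℚ] ↥K₀, (m h : ℂ) * ((h α : ↥K₀) : ℂ) = (q : ℂ))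
    ↔ ∀ v ∈ V,
        ((∑ h : ↥K₀ ≃ₐ[ℚ] ↥K₀, MonoidAlgebra.single h ((m h : ℂ)))
          * (∑ g : ↥K₀ ≃ₐ[ℚ] ↥K₀, MonoidAlgebra.single (g⁻¹) ((g α : ↥K₀) : ℂ))
          * v : MonoidAlgebra ℂ (↥K₀ ≃ₐ[ℚ] ↥K₀)) = 0 :=
  stmt_9_general K₀ α δ hδ V hV m
end

section
/- Let n ≥ 2 and 1 ≤ k ≤ n-1 be integers. The (n-1)-dimensional volume of {x ∈ [0,1)^{n-1} : ⌈x_1 + ... + x_{n-1}⌉ = k} equals A(n-1, k)/(n-1)!, where A denotes the Eulerian numbers and ⌈·⌉ is the ceiling function. -/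
def eulerianA : ℕ → ℕ → ℤ
  | 0, _ => 0
  | 1, k => if k = 1 then 1 else 0
  | n + 2, k => ((n + 2 - k + 1 : ℕ) : ℤ) * eulerianA (n + 1) (k - 1)
      + (k : ℤ) * eulerianA (n + 1) k

/-!
The volume `F_m(t)` of `{x ∈ [0,1)^m : ∑ xᵢ ≤ t}` is the Irwin–Hall distribution function
`(1/m!) ∑_j (-1)^j C(m,j) (t - j)₊^m`. Indeed, by Fubini `F_{m+1}(t) = ∫₀¹ F_m(t - u) du`, and
integrating the truncated powers turns `C(m,j)` into `C(m+1,j)` by Pascal's rule. The slab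
`⌈∑ xᵢ⌉ = k` is `{∑ xᵢ ≤ k} \ {∑ xᵢ ≤ k - 1}`, so its volume is
`F_m(k) - F_m(k-1) = (1/m!) ∑_{j<k} (-1)^j C(m+1,j) (k - j)^m`, and this explicit sum satisfies the
recurrence of the Eulerian numbers.
-/

open Finset MeasureTheory

theorem sum_range_neg_one_pow_mul_choose_succ {R : Type*} [CommRing R] (m : ℕ) (P : ℕ → R) :
    ∑ j ∈ range (m + 2), (-1) ^ j * ((m + 1).choose j : R) * P j
      = ∑ j ∈ range (m + 1), (-1) ^ j * (m.choose j : R) * (P j - P (j + 1)) := by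
  have := sum_choose_succ_mul (fun i _ => (-1 : R) ^ i * P i) m
  simp only [← mul_assoc, mul_comm _ ((-1 : R) ^ _)] at this
  rw [this, ← sum_add_distrib]
  exact sum_congr rfl fun j _ => by ring

def eulerianExplicit (m k : ℕ) : ℤ :=
  ∑ j ∈ range k, (-1) ^ j * ((m + 1).choose j : ℤ) * ((k : ℤ) - j) ^ m

theorem eulerianExplicit_zero_right (m : ℕ) : eulerianExplicit m 0 = 0 := rfl

theorem eulerianExplicit_succ_self {m : ℕ} (hm : 0 < m) : eulerianExplicit m (m + 1) = 0 := by
  -- after reflecting `j ↦ m - j`, the sum is the `(m + 1)`-st forward difference of `x ↦ x ^ m`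
  have h := congr_fun (fwdDiff_iter_pow_eq_zero_of_lt (R := ℤ) (Nat.lt_succ_self m)) 0
  rw [fwdDiff_iter_eq_sum_shift, sum_range_succ'] at h
  rw [eulerianExplicit, ← sum_range_reflect]
  simp only [Nat.reduceSubDiff, Int.nsmul_eq_mul, Nat.cast_add, Nat.cast_one, mul_one, zero_add,
    Int.zsmul_eq_mul, zero_nsmul, add_zero, zero_pow hm.ne', mul_zero, Pi.zero_apply] at h
  rw [Nat.add_sub_cancel, ← h]
  refine sum_congr rfl fun j hj => ?_
  have hj : j ≤ m := Nat.lt_succ_iff.mp (mem_range.mp hj)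
  rw [Nat.choose_symm_of_eq_add (by omega : m + 1 = (m - j) + (j + 1))]
  push_cast [hj]
  ring

theorem eulerianExplicit_succ_succ {m K : ℕ} (hK : K ≤ m + 1) :
    eulerianExplicit (m + 1) (K + 1)
      = ((m + 1 - K : ℕ) : ℤ) * eulerianExplicit m K
        + (K + 1 : ℤ) * eulerianExplicit m (K + 1) := by
  simp only [eulerianExplicit, sum_range_succ' _ K, mul_add, mul_sum, ← add_assoc,
    ← sum_add_distrib]
  congr 1
  · refine sum_congr rfl fun i hi => ?_
    have hi : i ≤ m + 1 := ((mem_range.mp hi).trans_le hK).le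
    have pascal :
        ((m + 1 + 1).choose (i + 1) : ℤ) = (m + 1).choose i + (m + 1).choose (i + 1) := by
      exact_mod_cast Nat.choose_succ_succ' (m + 1) i
    have absorb : ((m + 1).choose (i + 1) : ℤ) * (i + 1) = (m + 1).choose i * (m + 1 - i) := by
      exact_mod_cast Nat.choose_succ_right_eq (m + 1) i
    push_cast [hK]
    linear_combination (-1) ^ i * ((K : ℤ) - i) ^ m * (absorb - ((K : ℤ) - i) * pascal)
  · simp only [Nat.choose_zero_right]
    push_cast
    ring

theorem eulerianA_zero_right : ∀ m, eulerianA m 0 = 0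
  | 0 => rfl
  | 1 => rfl
  | m + 2 => by simp [eulerianA, eulerianA_zero_right (m + 1)]

theorem eulerianA_of_lt : ∀ {m k}, m < k → eulerianA m k = 0
  | 0, _, _ => rfl
  | 1, k, h => if_neg (by omega)
  | m + 2, k, h => by
      rw [eulerianA, eulerianA_of_lt (by omega : m + 1 < k - 1),
        eulerianA_of_lt (by omega : m + 1 < k), mul_zero, mul_zero, add_zero]

theorem eulerianA_succ {m : ℕ} (hm : 0 < m) (k : ℕ) :
    eulerianA (m + 1) k
      = ((m + 1 - k + 1 : ℕ) : ℤ) * eulerianA m (k - 1) + k * eulerianA m k := by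
  obtain ⟨n, rfl⟩ := Nat.exists_eq_add_one_of_ne_zero hm.ne'
  rfl

theorem eulerianA_eq_eulerianExplicit {m : ℕ} (hm : 0 < m) :
    ∀ k ≤ m + 1, eulerianA m k = eulerianExplicit m k := by
  induction m, hm using Nat.le_induction with
  | base =>
    intro k hk
    interval_cases k <;> decide
  | succ m hm ih =>
    rintro (_ | K) hK
    · rw [eulerianA_zero_right, eulerianExplicit_zero_right]
    rcases Nat.lt_or_ge K (m + 1) with hKm | hKm
    · rw [eulerianA_succ hm, eulerianExplicit_succ_succ hKm.le, Nat.add_sub_cancel,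
        ih K (by omega), ih (K + 1) hKm, show m + 1 - (K + 1) + 1 = m + 1 - K by omega]
      push_cast
      ring
    · obtain rfl : K = m + 1 := by omega
      rw [eulerianA_of_lt (by omega), eulerianExplicit_succ_self (by omega)]

theorem integral_max_zero_pow {m : ℕ} (hm : 0 < m) (x : ℝ) :
    ∫ v in (0 : ℝ)..x, max v 0 ^ m = max x 0 ^ (m + 1) / (m + 1) := by
  rcases le_total 0 x with hx | hx
  · rw [intervalIntegral.integral_congr (g := fun v => v ^ m) fun v hv => ?_, integral_pow,
      max_eq_left hx]
    · simp
    · rw [Set.uIcc_of_le hx] at hv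
      simp [max_eq_left hv.1]
  · rw [intervalIntegral.integral_congr (g := fun _ => 0) fun v hv => ?_,
      intervalIntegral.integral_zero, max_eq_right hx]
    · simp [hm.ne']
    · rw [Set.uIcc_of_ge hx] at hv
      simp [max_eq_right hv.2, hm.ne']

theorem integral_max_sub_zero_pow {m : ℕ} (hm : 0 < m) (a : ℝ) :
    ∫ u in (0 : ℝ)..1, max (a - u) 0 ^ m
      = (max a 0 ^ (m + 1) - max (a - 1) 0 ^ (m + 1)) / (m + 1) := by
  have hint : ∀ b c : ℝ, IntervalIntegrable (fun v : ℝ => max v 0 ^ m) volume b c :=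
    fun b c => ((continuous_id.max continuous_const).pow m).intervalIntegrable b c
  rw [intervalIntegral.integral_comp_sub_left (fun v => max v 0 ^ m), sub_zero,
    ← intervalIntegral.integral_interval_sub_left (hint 0 a) (hint 0 (a - 1)),
    integral_max_zero_pow hm, integral_max_zero_pow hm, sub_div]

/-- For `m = 0` this is the constant `1` (since `0 ^ 0 = 1`) rather than a step function, hence the
hypotheses `0 < m` below. -/
noncomputable def irwinHallCDF (m : ℕ) (t : ℝ) : ℝ :=
  (∑ j ∈ range (m + 1), (-1) ^ j * (m.choose j : ℝ) * max (t - j) 0 ^ m) / m.factorial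

theorem continuous_irwinHallCDF (m : ℕ) : Continuous (irwinHallCDF m) := by
  unfold irwinHallCDF
  fun_prop

theorem integral_irwinHallCDF_sub {m : ℕ} (hm : 0 < m) (t : ℝ) :
    ∫ u in (0 : ℝ)..1, irwinHallCDF m (t - u) = irwinHallCDF (m + 1) t := by
  have hterm : ∀ j ∈ range (m + 1),
      ∫ u in (0 : ℝ)..1, (-1) ^ j * (m.choose j : ℝ) * max (t - u - j) 0 ^ m
        = (-1) ^ j * (m.choose j : ℝ)
            * (max (t - j) 0 ^ (m + 1) - max (t - (j + 1 : ℕ)) 0 ^ (m + 1)) / (m + 1) := by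
    intro j _
    simp_rw [intervalIntegral.integral_const_mul, sub_right_comm t _ (j : ℝ)]
    rw [integral_max_sub_zero_pow hm, Nat.cast_succ, ← sub_sub, mul_div_assoc]
  have hint : ∀ j ∈ range (m + 1), IntervalIntegrable
      (fun u : ℝ => (-1) ^ j * (m.choose j : ℝ) * max (t - u - j) 0 ^ m) volume 0 1 :=
    fun j _ => by apply Continuous.intervalIntegrable; fun_prop
  rw [irwinHallCDF, sum_range_neg_one_pow_mul_choose_succ, Nat.factorial_succ]
  simp only [irwinHallCDF, intervalIntegral.integral_div, intervalIntegral.integral_finsetSum hint,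
    sum_congr rfl hterm]
  rw [← sum_div, div_div, Nat.cast_mul, Nat.cast_succ]

theorem irwinHallCDF_sub_irwinHallCDF_sub_one (m : ℕ) (t : ℝ) :
    irwinHallCDF m t - irwinHallCDF m (t - 1)
      = (∑ j ∈ range (m + 2), (-1) ^ j * ((m + 1).choose j : ℝ) * max (t - j) 0 ^ m)
          / m.factorial := by
  rw [irwinHallCDF, irwinHallCDF, ← sub_div, ← sum_sub_distrib,
    sum_range_neg_one_pow_mul_choose_succ]
  congr 1
  refine sum_congr rfl fun j _ => ?_
  rw [Nat.cast_succ, sub_right_comm t 1, ← sub_sub, mul_sub]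

theorem irwinHallCDF_one (t : ℝ) : irwinHallCDF 1 t = max t 0 - max (t - 1) 0 := by
  simp [irwinHallCDF, sum_range_succ, sub_eq_add_neg]

theorem irwinHallCDF_nonneg {m : ℕ} (hm : 0 < m) (t : ℝ) : 0 ≤ irwinHallCDF m t := by
  induction m, hm using Nat.le_induction generalizing t with
  | base => exact (irwinHallCDF_one t).symm ▸ sub_nonneg.2 (max_le_max (by linarith) le_rfl)
  | succ m hm ih =>
    rw [← integral_irwinHallCDF_sub hm]
    exact intervalIntegral.integral_nonneg zero_le_one fun u _ => ih _

theorem irwinHallCDF_natCast_sub_one {m k : ℕ} (hm : 0 < m) (hk : k ≤ m + 1) :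
    irwinHallCDF m k - irwinHallCDF m (k - 1) = eulerianExplicit m k / m.factorial := by
  rw [irwinHallCDF_sub_irwinHallCDF_sub_one, eulerianExplicit]
  congr 1
  push_cast
  refine (sum_subset (range_subset_range.mpr (by omega)) fun j _ hj => ?_).symm.trans
    (sum_congr rfl fun j hj => ?_)
  · rw [max_eq_right (by simpa using hj), zero_pow hm.ne', mul_zero]
  · rw [max_eq_left (sub_nonneg.mpr (by simpa using (mem_range.mp hj).le))]

def cubeSumLe (m : ℕ) (t : ℝ) : Set (Fin m → ℝ) :=
  {x | (∀ i, x i ∈ Set.Ico 0 1) ∧ ∑ i, x i ≤ t}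

theorem measurableSet_cubeSumLe (m : ℕ) (t : ℝ) : MeasurableSet (cubeSumLe m t) := by
  unfold cubeSumLe
  measurability

theorem volume_cubeSumLe_one (t : ℝ) :
    volume (cubeSumLe 1 t) = ENNReal.ofReal (max t 0 - max (t - 1) 0) := by
  have hpre :
      cubeSumLe 1 t = MeasurableEquiv.funUnique (Fin 1) ℝ ⁻¹' (Set.Ico 0 1 ∩ Set.Iic t) := by
    ext x
    simp [cubeSumLe, Fin.forall_fin_one]
  rw [hpre]
  refine ((volume_preserving_funUnique (Fin 1) ℝ).measure_preimage_equiv _).trans ?_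
  rw [measure_congr ((Ico_ae_eq_Ioc (μ := volume)).inter (ae_eq_refl (Set.Iic t))),
    Set.Ioc_inter_Iic, Real.volume_Ioc]
  rcases le_total t 0 with h | h
  · rw [ENNReal.ofReal_of_nonpos (by simp [h]), ENNReal.ofReal_of_nonpos (by simp [h])]
  · rcases le_total t 1 with h' | h' <;> simp [h, h']

theorem volume_cubeSumLe_succ (m : ℕ) (t : ℝ) :
    volume (cubeSumLe (m + 1) t) = ∫⁻ a in Set.Ico 0 1, volume (cubeSumLe m (t - a)) := by
  set T : Set (ℝ × (Fin m → ℝ)) :=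
    {p | p.1 ∈ Set.Ico 0 1 ∧ p.2 ∈ cubeSumLe m (t - p.1)} with hT
  have hTmeas : MeasurableSet T := by
    rw [hT]
    unfold cubeSumLe
    measurability
  have hpre : cubeSumLe (m + 1) t = MeasurableEquiv.piFinSuccAbove (fun _ => ℝ) 0 ⁻¹' T := by
    ext x
    simp only [cubeSumLe, hT, Set.mem_preimage, Set.mem_ofPred_eq,
      MeasurableEquiv.piFinSuccAbove_apply, Fin.forall_fin_succ, Fin.sum_univ_succ,
      Fin.insertNthEquiv, Fin.removeNth_zero, Equiv.symm_mk, Equiv.coe_fn_mk, Fin.tail,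
      le_sub_iff_add_le', and_assoc]
  have hslice : ∀ a, volume (Prod.mk a ⁻¹' T)
      = (Set.Ico 0 1).indicator (fun a => volume (cubeSumLe m (t - a))) a := by
    intro a
    by_cases ha : a ∈ Set.Ico (0 : ℝ) 1
    · simp only [hT, Set.preimage_ofPred_eq, ha, true_and, Set.ofPred_mem_eq, Set.indicator_of_mem]
    · simp only [hT, Set.preimage_ofPred_eq, ha, false_and, Set.ofPred_false, measure_empty,
        Set.indicator_of_notMem, not_false_eq_true]
  rw [hpre, (volume_preserving_piFinSuccAbove (fun _ => ℝ) 0).measure_preimage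
    hTmeas.nullMeasurableSet, Measure.volume_eq_prod, Measure.prod_apply hTmeas]
  simp_rw [hslice]
  exact lintegral_indicator measurableSet_Ico _

theorem volume_cubeSumLe {m : ℕ} (hm : 0 < m) (t : ℝ) :
    volume (cubeSumLe m t) = ENNReal.ofReal (irwinHallCDF m t) := by
  induction m, hm using Nat.le_induction generalizing t with
  | base => rw [volume_cubeSumLe_one, irwinHallCDF_one]
  | succ m hm ih =>
    have hint : IntegrableOn (fun a => irwinHallCDF m (t - a)) (Set.Ioc 0 1) :=
      ((continuous_irwinHallCDF m).comp (by fun_prop)).integrableOn_Ioc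
    rw [volume_cubeSumLe_succ, ← integral_irwinHallCDF_sub hm,
      intervalIntegral.integral_of_le zero_le_one, setLIntegral_congr Ico_ae_eq_Ioc,
      ofReal_integral_eq_lintegral_ofReal hint (ae_of_all _ fun a => irwinHallCDF_nonneg hm _)]
    simp_rw [ih]

theorem cubeSumLe_mono (m : ℕ) : Monotone (cubeSumLe m) :=
  fun _ _ hst _ hx => ⟨hx.1, hx.2.trans hst⟩

theorem volume_cubeSumLe_diff {m : ℕ} (hm : 0 < m) (t : ℝ) :
    volume (cubeSumLe m t \ cubeSumLe m (t - 1))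
      = ENNReal.ofReal (irwinHallCDF m t - irwinHallCDF m (t - 1)) := by
  rw [measure_sdiff (cubeSumLe_mono m (by linarith))
      (measurableSet_cubeSumLe m _).nullMeasurableSet (by simp [volume_cubeSumLe hm]),
    volume_cubeSumLe hm, volume_cubeSumLe hm,
    ENNReal.ofReal_sub _ (irwinHallCDF_nonneg hm _)]

theorem setOf_ceil_sum_eq (m : ℕ) (k : ℤ) :
    {x : Fin m → ℝ | (∀ i, x i ∈ Set.Ico 0 1) ∧ ⌈∑ i, x i⌉ = k}
      = cubeSumLe m k \ cubeSumLe m (k - 1) := by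
  ext x
  simp only [cubeSumLe, Set.mem_sdiff, Set.mem_ofPred_eq, Int.ceil_eq_iff, not_and, not_le]
  tauto

open MeasureTheory in
theorem stmt_15_general (n k : ℕ) (hn : 2 ≤ n) (hk2 : k ≤ n - 1) :
    volume {x : Fin (n - 1) → ℝ | (∀ i, x i ∈ Set.Ico (0 : ℝ) 1) ∧ ⌈∑ i, x i⌉ = (k : ℤ)}
      = ENNReal.ofReal ((eulerianA (n - 1) k : ℝ) / ((n - 1).factorial : ℝ)) := by
  have hm : 0 < n - 1 := by omega
  rw [setOf_ceil_sum_eq, Int.cast_natCast, volume_cubeSumLe_diff hm,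
    irwinHallCDF_natCast_sub_one hm (by omega), eulerianA_eq_eulerianExplicit hm k (by omega)]

open MeasureTheory in
theorem stmt_15 (n k : ℕ) (hn : 2 ≤ n) (hk1 : 1 ≤ k) (hk2 : k ≤ n - 1) :
    volume {x : Fin (n - 1) → ℝ | (∀ i, x i ∈ Set.Ico (0 : ℝ) 1) ∧ ⌈∑ i, x i⌉ = (k : ℤ)}
      = ENNReal.ofReal ((eulerianA (n - 1) k : ℝ) / ((n - 1).factorial : ℝ)) :=
  stmt_15_general n k hn hk2
end

section
/- Let f(x) = (x²+ax)² + b(x²+ax) + c be an irreducible quartic over ℚ with roots ordered as α_1 = α_{1,1}, α_2 = α_{2,1}, α_3 = α_{2,2}, α_4 = α_{1,2}, so that α_1 + α_4 = α_2 + α_3 = -a. Let 𝔇 = {(x_1,x_2,x_3,x_4) ∈ [0,1]^4 : 0 ≤ x_1 ≤ x_2 ≤ x_3 ≤ x_4 ≤ 1, x_1 + x_4 = 1, x_2 + x_3 = 1} and for 0 ≤ A < 1 let D_i = {x ∈ 𝔇 : x_i ≤ A}. Then (1/4)·∑_{i=1}^4 vol(D_i)/vol(𝔇) = A, where vol is the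 2-dimensional volume obtained via the parametrization (x_1, x_2) ↦ (x_1, x_2, 1-x_2, 1-x_1) on {0 ≤ x_1 ≤ x_2 < 1/2}. -/
open Set MeasureTheory

lemma key1 (s : Set ℝ) (hs : MeasurableSet s) :
    volume {p : ℝ × ℝ | p.1 ∈ s ∧ p.1 ≤ p.2 ∧ p.2 < 1 / 2} =
    ∫⁻ x in s, ENNReal.ofReal (1 / 2 - x) := by
  have hS : MeasurableSet {p : ℝ × ℝ | p.1 ∈ s ∧ p.1 ≤ p.2 ∧ p.2 < 1 / 2} :=
    (hs.preimage measurable_fst).inter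
      ((measurableSet_le measurable_fst measurable_snd).inter
        (measurableSet_lt measurable_snd measurable_const))
  rw [Measure.volume_eq_prod, Measure.prod_apply hS, ← lintegral_indicator hs]
  refine lintegral_congr fun x => ?_
  by_cases hx : x ∈ s
  · have : (Prod.mk x ⁻¹' {p : ℝ × ℝ | p.1 ∈ s ∧ p.1 ≤ p.2 ∧ p.2 < 1 / 2}) = Ico x (1 / 2) := by
      ext y; simp [hx, Set.mem_Ico]
    rw [this, Real.volume_Ico, Set.indicator_of_mem hx]
  · have : (Prod.mk x ⁻¹' {p : ℝ × ℝ | p.1 ∈ s ∧ p.1 ≤ p.2 ∧ p.2 < 1 / 2}) = ∅ := by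
      ext y; simp [hx]
    rw [this, Set.indicator_of_notMem hx, measure_empty]

lemma key2 (s : Set ℝ) (hs : MeasurableSet s) :
    volume {p : ℝ × ℝ | 0 ≤ p.1 ∧ p.1 ≤ p.2 ∧ p.2 ∈ s} =
    ∫⁻ y in s, ENNReal.ofReal y := by
  have hS : MeasurableSet {p : ℝ × ℝ | 0 ≤ p.1 ∧ p.1 ≤ p.2 ∧ p.2 ∈ s} :=
    (measurableSet_le measurable_const measurable_fst).inter
      ((measurableSet_le measurable_fst measurable_snd).inter (hs.preimage measurable_snd))
  rw [Measure.volume_eq_prod, Measure.prod_apply_symm hS, ← lintegral_indicator hs]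
  refine lintegral_congr fun y => ?_
  by_cases hy : y ∈ s
  · have : ((fun x => (x, y)) ⁻¹' {p : ℝ × ℝ | 0 ≤ p.1 ∧ p.1 ≤ p.2 ∧ p.2 ∈ s}) = Icc 0 y := by
      ext x; simp [hy, Set.mem_Icc, and_comm]
    rw [this, Real.volume_Icc, Set.indicator_of_mem hy, sub_zero]
  · have : ((fun x => (x, y)) ⁻¹' {p : ℝ × ℝ | 0 ≤ p.1 ∧ p.1 ≤ p.2 ∧ p.2 ∈ s}) = ∅ := by
      ext x; simp [hy]
    rw [this, Set.indicator_of_notMem hy, measure_empty]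

lemma lemA (u v : ℝ) (huv : u ≤ v) (hv : v ≤ 1 / 2) :
    ∫⁻ x in Icc u v, ENNReal.ofReal (1 / 2 - x) =
      ENNReal.ofReal ((1 / 2 - u) ^ 2 / 2 - (1 / 2 - v) ^ 2 / 2) := by
  rw [← ofReal_integral_eq_lintegral_ofReal]
  · congr 1
    rw [integral_Icc_eq_integral_Ioc, ← intervalIntegral.integral_of_le huv]
    rw [intervalIntegral.integral_sub intervalIntegrable_const intervalIntegral.intervalIntegrable_id,
      intervalIntegral.integral_const, integral_id, smul_eq_mul]
    ring
  · exact (continuous_const.sub continuous_id).integrableOn_Icc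
  · filter_upwards [ae_restrict_mem measurableSet_Icc] with x hx
    simp only [Pi.zero_apply]; linarith [hx.2]

lemma lemB (u v : ℝ) (h0 : 0 ≤ u) (huv : u ≤ v) :
    ∫⁻ y in Icc u v, ENNReal.ofReal y = ENNReal.ofReal ((v ^ 2 - u ^ 2) / 2) := by
  rw [← ofReal_integral_eq_lintegral_ofReal]
  · congr 1
    rw [integral_Icc_eq_integral_Ioc, ← intervalIntegral.integral_of_le huv, integral_id]
  · exact continuous_id.integrableOn_Icc
  · filter_upwards [ae_restrict_mem measurableSet_Icc] with x hx
    simpa using le_trans h0 hx.1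

open Polynomial MeasureTheory in
theorem stmt_18 (a b c : ℚ)
    (hf : Irreducible (((X ^ 2 + C a * X) ^ 2 + C b * (X ^ 2 + C a * X) + C c) : Polynomial ℚ))
    (α : Fin 4 → ℂ)
    (hroots : (((X ^ 2 + C a * X) ^ 2 + C b * (X ^ 2 + C a * X) + C c : Polynomial ℚ)).map
        (algebraMap ℚ ℂ) = ∏ i, (X - C (α i)))
    (hrel1 : α 0 + α 3 = -(a : ℂ)) (hrel2 : α 1 + α 2 = -(a : ℂ))
    (A : ℝ) (hA0 : 0 ≤ A) (hA1 : A < 1)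
    (T : Set (ℝ × ℝ)) (hT : T = {p | 0 ≤ p.1 ∧ p.1 ≤ p.2 ∧ p.2 < 1 / 2}) :
    (1 / 4 : ℝ) * (((volume {p ∈ T | p.1 ≤ A}).toReal + (volume {p ∈ T | p.2 ≤ A}).toReal
      + (volume {p ∈ T | 1 - p.2 ≤ A}).toReal + (volume {p ∈ T | 1 - p.1 ≤ A}).toReal)
      / (volume T).toReal) = A := by
  subst hT
  have hIcoIcc : ∀ (u v : ℝ) (f : ℝ → ENNReal),
      ∫⁻ x in Ico u v, f x = ∫⁻ x in Icc u v, f x :=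
    fun u v f => setLIntegral_congr Ico_ae_eq_Icc
  have hT' : volume {p : ℝ × ℝ | 0 ≤ p.1 ∧ p.1 ≤ p.2 ∧ p.2 < 1 / 2}
      = ENNReal.ofReal (1 / 8) := by
    have e : {p : ℝ × ℝ | 0 ≤ p.1 ∧ p.1 ≤ p.2 ∧ p.2 < 1 / 2}
        = {p : ℝ × ℝ | p.1 ∈ Ico 0 (1 / 2) ∧ p.1 ≤ p.2 ∧ p.2 < 1 / 2} := by
      ext p; constructor
      · rintro ⟨h1, h2, h3⟩; exact ⟨⟨h1, lt_of_le_of_lt h2 h3⟩, h2, h3⟩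
      · rintro ⟨h1, h2, h3⟩; exact ⟨h1.1, h2, h3⟩
    rw [e, key1 _ measurableSet_Ico, hIcoIcc, lemA 0 (1 / 2) (by norm_num) le_rfl]
    norm_num
  rcases lt_or_ge A (1 / 2) with hA | hA
  · have e1 : {p ∈ {p : ℝ × ℝ | 0 ≤ p.1 ∧ p.1 ≤ p.2 ∧ p.2 < 1 / 2} | p.1 ≤ A}
        = {p : ℝ × ℝ | p.1 ∈ Icc 0 A ∧ p.1 ≤ p.2 ∧ p.2 < 1 / 2} := by
      ext p; constructor
      · rintro ⟨⟨h1, h2, h3⟩, h4⟩; exact ⟨⟨h1, h4⟩, h2, h3⟩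
      · rintro ⟨⟨h1, h4⟩, h2, h3⟩; exact ⟨⟨h1, h2, h3⟩, h4⟩
    have e2 : {p ∈ {p : ℝ × ℝ | 0 ≤ p.1 ∧ p.1 ≤ p.2 ∧ p.2 < 1 / 2} | p.2 ≤ A}
        = {p : ℝ × ℝ | 0 ≤ p.1 ∧ p.1 ≤ p.2 ∧ p.2 ∈ Icc 0 A} := by
      ext p; constructor
      · rintro ⟨⟨h1, h2, h3⟩, h4⟩; exact ⟨h1, h2, le_trans h1 h2, h4⟩
      · rintro ⟨h1, h2, h3, h4⟩; exact ⟨⟨h1, h2, lt_of_le_of_lt h4 hA⟩, h4⟩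
    have e3 : {p ∈ {p : ℝ × ℝ | 0 ≤ p.1 ∧ p.1 ≤ p.2 ∧ p.2 < 1 / 2} | 1 - p.2 ≤ A}
        = (∅ : Set (ℝ × ℝ)) := by
      ext p; simp only [Set.mem_setOf_eq, Set.mem_empty_iff_false, iff_false, not_and]
      rintro ⟨h1, h2, h3⟩ h4; linarith
    have e4 : {p ∈ {p : ℝ × ℝ | 0 ≤ p.1 ∧ p.1 ≤ p.2 ∧ p.2 < 1 / 2} | 1 - p.1 ≤ A}
        = (∅ : Set (ℝ × ℝ)) := by
      ext p; simp only [Set.mem_setOf_eq, Set.mem_empty_iff_false, iff_false, not_and]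
      rintro ⟨h1, h2, h3⟩ h4; linarith
    have v1 : volume {p ∈ {p : ℝ × ℝ | 0 ≤ p.1 ∧ p.1 ≤ p.2 ∧ p.2 < 1 / 2} | p.1 ≤ A}
        = ENNReal.ofReal (1 / 8 - (1 / 2 - A) ^ 2 / 2) := by
      rw [e1, key1 _ measurableSet_Icc, lemA 0 A hA0 hA.le]
      norm_num
    have v2 : volume {p ∈ {p : ℝ × ℝ | 0 ≤ p.1 ∧ p.1 ≤ p.2 ∧ p.2 < 1 / 2} | p.2 ≤ A}
        = ENNReal.ofReal (A ^ 2 / 2) := by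
      rw [e2, key2 _ measurableSet_Icc, lemB 0 A le_rfl hA0]
      norm_num
    rw [v1, v2, e3, e4, hT', measure_empty]
    rw [ENNReal.toReal_ofReal (by nlinarith), ENNReal.toReal_ofReal (by nlinarith),
      ENNReal.toReal_ofReal (by norm_num), ENNReal.toReal_zero]
    field_simp
    ring
  · have e1 : {p ∈ {p : ℝ × ℝ | 0 ≤ p.1 ∧ p.1 ≤ p.2 ∧ p.2 < 1 / 2} | p.1 ≤ A}
        = {p : ℝ × ℝ | 0 ≤ p.1 ∧ p.1 ≤ p.2 ∧ p.2 < 1 / 2} := by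
      ext p; constructor
      · rintro ⟨h, _⟩; exact h
      · rintro ⟨h1, h2, h3⟩; exact ⟨⟨h1, h2, h3⟩, by linarith⟩
    have e2 : {p ∈ {p : ℝ × ℝ | 0 ≤ p.1 ∧ p.1 ≤ p.2 ∧ p.2 < 1 / 2} | p.2 ≤ A}
        = {p : ℝ × ℝ | 0 ≤ p.1 ∧ p.1 ≤ p.2 ∧ p.2 < 1 / 2} := by
      ext p; constructor
      · rintro ⟨h, _⟩; exact h
      · rintro ⟨h1, h2, h3⟩; exact ⟨⟨h1, h2, h3⟩, by linarith⟩
    have e3 : {p ∈ {p : ℝ × ℝ | 0 ≤ p.1 ∧ p.1 ≤ p.2 ∧ p.2 < 1 / 2} | 1 - p.2 ≤ A}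
        = {p : ℝ × ℝ | 0 ≤ p.1 ∧ p.1 ≤ p.2 ∧ p.2 ∈ Ico (1 - A) (1 / 2)} := by
      ext p; constructor
      · rintro ⟨⟨h1, h2, h3⟩, h4⟩; exact ⟨h1, h2, by linarith, h3⟩
      · rintro ⟨h1, h2, h3, h4⟩; exact ⟨⟨h1, h2, h4⟩, by linarith⟩
    have e4 : {p ∈ {p : ℝ × ℝ | 0 ≤ p.1 ∧ p.1 ≤ p.2 ∧ p.2 < 1 / 2} | 1 - p.1 ≤ A}
        = {p : ℝ × ℝ | p.1 ∈ Ico (1 - A) (1 / 2) ∧ p.1 ≤ p.2 ∧ p.2 < 1 / 2} := by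
      ext p; constructor
      · rintro ⟨⟨h1, h2, h3⟩, h4⟩; exact ⟨⟨by linarith, by linarith⟩, h2, h3⟩
      · rintro ⟨⟨h1, h1'⟩, h2, h3⟩; exact ⟨⟨by linarith, h2, h3⟩, by linarith⟩
    have v3 : volume {p ∈ {p : ℝ × ℝ | 0 ≤ p.1 ∧ p.1 ≤ p.2 ∧ p.2 < 1 / 2} | 1 - p.2 ≤ A}
        = ENNReal.ofReal (((1 / 2) ^ 2 - (1 - A) ^ 2) / 2) := by
      rw [e3, key2 _ measurableSet_Ico, hIcoIcc, lemB (1 - A) (1 / 2) (by linarith) (by linarith)]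
    have v4 : volume {p ∈ {p : ℝ × ℝ | 0 ≤ p.1 ∧ p.1 ≤ p.2 ∧ p.2 < 1 / 2} | 1 - p.1 ≤ A}
        = ENNReal.ofReal ((1 / 2 - (1 - A)) ^ 2 / 2) := by
      rw [e4, key1 _ measurableSet_Ico, hIcoIcc, lemA (1 - A) (1 / 2) (by linarith) le_rfl]
      norm_num
    rw [e1, e2, v3, v4, hT']
    rw [ENNReal.toReal_ofReal (by norm_num), ENNReal.toReal_ofReal (by nlinarith),
      ENNReal.toReal_ofReal (by nlinarith)]
    field_simp
    ring
end
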